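/- arXiv:2101.11291 — 7 statements merged into one kernel-verified Lean document; each statement's English description precedes it below -/
import Mathlib

section
/- Let Γ be a group, Γ' a subgroup of Γ of finite index, and f : Γ' → Γ a group homomorphism. Define subgroups Γ_n of Γ inductively by Γ_0 = Γ, Γ_1 = Γ', and Γ_{n} = {γ ∈ Γ_{n-1} : f(γ) ∈ Γ_{n-1}} for n ≥ 2. Then the sequence n ↦ [Γ_n : Γ_{n+1}] is non-increasing. -/
/-! Inside `Γ'`, the step `Γₙ₊₁ ↦ Γₙ₊₂` intersects `Γₙ₊₁` with `f⁻¹(Γₙ₊₁)`, so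
`[Γₙ₊₁ : Γₙ₊₂] = [Γₙ₊₁ : Γₙ₊₁ ∩ f⁻¹(Γₙ₊₁)] = [f(Γₙ₊₁) : f(Γₙ₊₁) ∩ Γₙ₊₁]`.
Since `f(Γₙ₊₁) ≤ Γₙ`, the cosets of `Γₙ₊₁` met by `f(Γₙ₊₁)` are among those in `Γₙ`, and the last
index is at most `[Γₙ : Γₙ₊₁]`, which is finite because every `Γₙ` has finite index in `Γ`. -/

/-- The descending sequence of subgroups attached to a virtual endomorphism `(Γ', f)`
of a group `Γ`:  `Γ₀ = Γ`, `Γ₁ = Γ'` and, for `n ≥ 2`,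
`Γₙ = {γ ∈ Γₙ₋₁ | f γ ∈ Γₙ₋₁}`. -/
def virtualEndTower {Γ : Type*} [Group Γ] (Γ' : Subgroup Γ) (f : Γ' →* Γ) :
    ℕ → Subgroup Γ
  | 0 => ⊤
  | 1 => Γ'
  | (n + 2) =>
    Subgroup.map Γ'.subtype
      (((virtualEndTower Γ' f (n + 1)).comap Γ'.subtype) ⊓
        ((virtualEndTower Γ' f (n + 1)).comap f))

namespace Subgroup

variable {G M : Type*} [Group G] [Group M]

theorem finiteIndex_comap (φ : G →* M) (H : Subgroup M) [H.FiniteIndex] :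
    (H.comap φ).FiniteIndex :=
  ⟨by rw [index_comap]; exact isFiniteRelIndex_of_finiteIndex.relIndex_ne_zero⟩

theorem relIndex_comap_le_of_map_le (φ : G →* M) {A : Subgroup G} {H K : Subgroup M}
    (hA : A.map φ ≤ K) (hHK : H.relIndex K ≠ 0) :
    (H.comap φ).relIndex A ≤ H.relIndex K := by
  rw [relIndex_comap]
  exact relIndex_le_of_le_right hA hHK

end Subgroup

namespace virtualEndTower

open Subgroup

variable {Γ : Type*} [Group Γ] (Γ' : Subgroup Γ) (f : Γ' →* Γ)

theorem succ_le_base (n : ℕ) : virtualEndTower Γ' f (n + 1) ≤ Γ' := by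
  cases n with
  | zero => exact le_rfl
  | succ n =>
    rintro _ ⟨y, -, rfl⟩
    exact y.2

theorem map_subgroupOf_succ_le (n : ℕ) :
    ((virtualEndTower Γ' f (n + 1)).subgroupOf Γ').map f ≤ virtualEndTower Γ' f n := by
  cases n with
  | zero => exact le_top
  | succ n =>
    rintro _ ⟨x, hx, rfl⟩
    obtain ⟨y, hy, hyx⟩ := hx
    obtain rfl : y = x := Subtype.ext hyx
    exact hy.2

theorem finiteIndex [Γ'.FiniteIndex] (n : ℕ) : (virtualEndTower Γ' f n).FiniteIndex := by
  induction n with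
  | zero => exact instFiniteIndexTop
  | succ n ih =>
    cases n with
    | zero => assumption
    | succ n =>
      refine ⟨?_⟩
      rw [virtualEndTower, index_map_subtype]
      exact mul_ne_zero (index_inf_ne_zero (instFiniteIndex_subgroupOf _ Γ').index_ne_zero
        (finiteIndex_comap f _).index_ne_zero) FiniteIndex.index_ne_zero

theorem relIndex_add_two (n : ℕ) :
    (virtualEndTower Γ' f (n + 2)).relIndex (virtualEndTower Γ' f (n + 1)) =
      ((virtualEndTower Γ' f (n + 1)).comap f).relIndex
        ((virtualEndTower Γ' f (n + 1)).subgroupOf Γ') := by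
  have hmap : ((virtualEndTower Γ' f (n + 1)).subgroupOf Γ').map Γ'.subtype =
      virtualEndTower Γ' f (n + 1) := by
    rw [subgroupOf_map_subtype, inf_eq_left.mpr (succ_le_base Γ' f n)]
  rw [virtualEndTower, ← hmap, relIndex_map_map_of_injective _ _ Γ'.subtype_injective,
    hmap]
  exact inf_relIndex_left _ _

end virtualEndTower

/-- For a virtual endomorphism `(Γ', f)` of a group `Γ` (with `Γ'` of
finite index), the sequence `n ↦ [Γₙ : Γₙ₊₁]` of indices is non-increasing. -/
theorem virtualEndTower_relindex_antitone {Γ : Type*} [Group Γ]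
    (Γ' : Subgroup Γ) (hΓ' : Γ'.FiniteIndex) (f : Γ' →* Γ) (n : ℕ) :
    (virtualEndTower Γ' f (n + 2)).relIndex (virtualEndTower Γ' f (n + 1)) ≤
      (virtualEndTower Γ' f (n + 1)).relIndex (virtualEndTower Γ' f n) := by
  have := virtualEndTower.finiteIndex Γ' f (n + 1)
  rw [virtualEndTower.relIndex_add_two]
  exact Subgroup.relIndex_comap_le_of_map_le f (virtualEndTower.map_subgroupOf_succ_le Γ' f n)
    Subgroup.isFiniteRelIndex_of_finiteIndex.relIndex_ne_zero
end

section
/- Let Λ be a finitely generated abelian group and let S ⊆ Λ be a finite subset containing no element of finite order. Then there exists a group homomorphism L : Λ → ℤ such that L(λ) ≠ 0 for every λ ∈ S. -/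
/-- Separation: a single element of infinite order admits a hom to `ℤ` not vanishing on it. -/
lemma exists_hom_to_int_ne_zero_of_not_isOfFinAddOrder
    {Λ : Type*} [AddCommGroup Λ] [AddGroup.FG Λ]
    {x : Λ} (hx : ¬ IsOfFinAddOrder x) : ∃ g : Λ →+ ℤ, g x ≠ 0 := by
  have hfin : Module.Finite ℤ Λ := Module.Finite.iff_addGroup_fg.mpr ‹_›
  set T := Submodule.torsion ℤ Λ with hT
  have hπx : T.mkQ x ≠ 0 := by
    intro h
    rw [Submodule.mkQ_apply, Submodule.Quotient.mk_eq_zero] at h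
    obtain ⟨a, ha⟩ := h
    exact hx (isOfFinAddOrder_iff_zsmul_eq_zero.mpr
      ⟨(a : ℤ), mem_nonZeroDivisors_iff_ne_zero.mp a.2, ha⟩)
  let b := Module.Free.chooseBasis ℤ (Λ ⧸ T)
  have hrepr : b.repr (T.mkQ x) ≠ 0 := by
    intro h
    apply hπx
    have := congrArg b.repr.symm h
    simpa using this
  obtain ⟨i, hi⟩ := Finsupp.ne_iff.mp hrepr
  exact ⟨((b.coord i).comp T.mkQ).toAddMonoidHom, by simpa [Module.Basis.coord_apply] using hi⟩

/-- Let `Λ` be a finitely generated abelian group and `S ⊆ Λ` a finite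
subset containing no element of finite (additive) order. Then there is a group
homomorphism `L : Λ →+ ℤ` with `L λ ≠ 0` for every `λ ∈ S`. -/
theorem finitely_generated_abelian_exists_hom_to_int_nonzero_on_finset
    {Λ : Type*} [AddCommGroup Λ] [AddGroup.FG Λ]
    (S : Finset Λ) (hS : ∀ x ∈ S, ¬ IsOfFinAddOrder x) :
    ∃ L : Λ →+ ℤ, ∀ x ∈ S, L x ≠ 0 := by
  classical
  induction S using Finset.induction_on with
  | empty => exact ⟨0, by simp⟩
  | @insert a s ha ih =>
    obtain ⟨f, hf⟩ := ih (fun x hx => hS x (Finset.mem_insert_of_mem hx))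
    obtain ⟨g, hg⟩ := exists_hom_to_int_ne_zero_of_not_isOfFinAddOrder
      (hS a (Finset.mem_insert_self a s))
    obtain ⟨n, hn⟩ := Infinite.exists_notMem_finset
      ((insert a s).image (fun x => (-(g x)) / (f x)))
    refine ⟨n • f + g, fun x hx => ?_⟩
    have key : f x ≠ 0 → n * f x + g x ≠ 0 := by
      intro hfx h
      apply hn
      refine Finset.mem_image.mpr ⟨x, hx, ?_⟩
      have : -(g x) = n * f x := by linarith
      rw [this, Int.mul_ediv_cancel _ hfx]
    have hLx : (n • f + g) x = n * f x + g x := by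
      simp [smul_eq_mul]
    rw [hLx]
    rcases Finset.mem_insert.mp hx with rfl | hxs
    · by_cases hfa : f x = 0
      · simpa [hfa] using hg
      · exact key hfa
    · exact key (hf x hxs)
end

section
/- Let L be a number field that is Galois over ℚ with G = Gal(L/ℚ), let 𝒪 be its ring of integers, 𝒫 the set of nonzero prime ideals of 𝒪, ℐ the group of fractional ideals of L and ℐ⁺ the monoid of nonzero integral ideals. Let S ⊆ 𝒫 be a finite subset and r > 0 an integer. Then ℐ contains a G-stable subgroup M that is a free ℤ[G]-module of rank r such that: (i) the only integral ideal belonging to M is the unit ideal 𝒪 (i.e. M ∩ ℐ⁺ is trivial), and (ii) no prime ideal π ∈ S occurs in the prime factorization of any ideal in M. -/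
/-!
Fix `θ ∈ 𝓞` moved by every `σ ≠ 1`. If a prime `𝔓` contains `b - θ` for some `b ∈ ℤ` and its
residue characteristic `p` divides none of the norms of `σ θ - θ` (`σ ≠ 1`), then `σ 𝔓 = 𝔓`
would put `σ θ - θ` in `𝔓`; so `𝔓` has trivial stabilizer. Such primes exist with `p` outside any
given finite set, because `N(b - θ) = χ(b)` for the characteristic polynomial `χ` of `θ`, and a
nonconstant integer polynomial has infinitely many prime divisors (Schur). Hence there are `2r`
primes `𝔓ᵢ, 𝔔ᵢ` lying in distinct free Galois orbits that avoid `S`, and `(i, σ) ↦ σ 𝔓ᵢ - σ 𝔔ᵢ`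
embeds `ℤ[G]^r` equivariantly. An ideal in the image has exponent `n` at `σ 𝔓ᵢ` and `-n` at `σ 𝔔ᵢ`,
so it is integral only when it is trivial.
-/

open IsDedekindDomain NumberField

/-- The action of an element `σ ∈ Gal(L/ℚ)` on the set of nonzero prime ideals of the
ring of integers of `L`, via the restriction of `σ` to the ring of integers. -/
noncomputable def galPrime (L : Type*) [Field L] [NumberField L] [IsGalois ℚ L]
    (σ : L ≃ₐ[ℚ] L) (π : HeightOneSpectrum (𝓞 L)) :
    HeightOneSpectrum (𝓞 L) where
  asIdeal := Ideal.map (galRestrict ℤ ℚ L (𝓞 L) σ) π.asIdeal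
  isPrime := by
    haveI := π.isPrime
    exact Ideal.map_isPrime_of_equiv (galRestrict ℤ ℚ L (𝓞 L) σ : (𝓞 L) ≃ₐ[ℤ] (𝓞 L))
  ne_bot := by
    rw [Ne, Ideal.map_eq_bot_iff_of_injective
      (AlgEquiv.injective (galRestrict ℤ ℚ L (𝓞 L) σ))]
    exact π.ne_bot

open Function Finsupp MulAction

open Polynomial in
theorem Polynomial.exists_prime_not_dvd_dvd_eval (f : ℤ[X]) (hf : 0 < f.natDegree) {N : ℤ}
    (hN : N ≠ 0) : ∃ p b : ℤ, Prime p ∧ ¬p ∣ N ∧ p ∣ f.eval b := by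
  by_cases hc : f.eval 0 = 0
  · obtain ⟨p, hNp, hp⟩ := Nat.exists_infinite_primes (N.natAbs + 1)
    refine ⟨p, 0, Nat.prime_iff_prime_int.mp hp, fun hpN => ?_, by simp [hc]⟩
    have := Nat.le_of_dvd (Int.natAbs_pos.mpr hN) (Int.natCast_dvd.mp hpN)
    omega
  set c := f.eval 0
  have hne : ∀ d : ℤ, f - C d ≠ 0 := fun d h => by
    simp [sub_eq_zero.mp h] at hf
  obtain ⟨k, hk⟩ : ∃ k : ℤ, ((f - C c) * (f - C (-c))).eval (c * N * k) ≠ 0 := by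
    by_contra! h
    have hcomp : ((f - C c) * (f - C (-c))).comp (C (c * N) * X) = 0 :=
      zero_of_eval_zero _ fun k => by simpa [eval_comp] using h k
    refine mul_ne_zero (hne c) (hne (-c)) ((comp_eq_zero_iff.mp hcomp).resolve_right ?_)
    simp [hc, hN]
  -- `f (c N k) ≡ c [ZMOD c N k]`, so `f (c N k) = c w` with `w ≡ 1 [ZMOD N]` and `w ≠ ±1`.
  obtain ⟨s, hs⟩ := sub_dvd_eval_sub (c * N * k) 0 f
  set w := 1 + N * k * s
  have hfw : f.eval (c * N * k) = c * w := by linear_combination hs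
  obtain ⟨p, hp, hpw⟩ := Int.exists_prime_and_dvd (n := w) fun h => hk <| by
    rcases Int.natAbs_eq_iff.mp h with h | h <;> simp [hfw, h]
  refine ⟨p, c * N * k, hp, fun hpN => hp.not_dvd_one ?_, hfw ▸ hpw.mul_left c⟩
  have := dvd_sub hpw (hpN.mul_right (k * s))
  rwa [show w - N * (k * s) = 1 by ring] at this

theorem Algebra.eval_charpoly_lmul {R S : Type*} [CommRing R] [CommRing S] [Algebra R S]
    [Module.Free R S] [Module.Finite R S] (x : S) (b : R) :
    (lmul R S x).charpoly.eval b = norm R (algebraMap R S b - x) := by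
  rw [LinearMap.eval_charpoly, norm_apply, map_sub (lmul R S), Algebra.lmul_algebraMap]
  rfl

theorem Ideal.dvd_absNorm_of_le_of_under_eq {S : Type*} [CommRing S] [IsDedekindDomain S]
    [Module.Free ℤ S] {P I : Ideal S} {p : ℤ} (hP : P.under ℤ = span {p}) (hI : I ≤ P) :
    p ∣ (absNorm I : ℤ) := by
  rw [← mem_span_singleton, ← hP, mem_comap, eq_intCast, Int.cast_natCast]
  exact hI (absNorm_mem I)

theorem Finsupp.mapDomain_sub_mapDomain_apply_left {α β M : Type*} [AddCommGroup M]
    {A B : α → β} (hA : Injective A) (hAB : ∀ a a', A a ≠ B a') (v : α →₀ M) (a : α) :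
    (mapDomain A v - mapDomain B v) (A a) = v a := by
  rw [coe_sub, Pi.sub_apply, mapDomain_apply hA,
    mapDomain_of_notMem_range _ _ fun ⟨a', h⟩ => hAB a a' h.symm, sub_zero]

namespace MulAction

variable {G X : Type*} [Group G] [MulAction G X]

theorem exists_injective_smul_of_infinite {κ : Type*} [Finite G] [Countable κ]
    (hfree : {x : X | stabilizer G x = ⊥}.Infinite) {S : Set X} (hS : S.Finite) :
    ∃ c : κ → X, Injective (fun q : κ × G => q.2 • c q.1) ∧ ∀ q : κ × G, q.2 • c q.1 ∉ S := by
  let π : X → orbitRel.Quotient G X := Quotient.mk _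
  have hπ : ∀ (g : G) x, π (g • x) = π x := fun g x => Quotient.sound ⟨g, rfl⟩
  have hfibre : ∀ y, (π ⁻¹' {y}).Finite := by
    rintro ⟨x⟩
    exact (Set.finite_range fun g : G => g • x).subset fun y hy =>
      orbitRel_apply.mp (Quotient.exact hy)
  have hinf : (π '' {x | stabilizer G x = ⊥} \ π '' S).Infinite := by
    refine Set.Infinite.sdiff (fun hfin => hfree ?_) (hS.image π)
    exact (hfin.preimage' fun y _ => hfibre y).subset (Set.subset_preimage_image _ _)
  obtain ⟨ι, hι⟩ := exists_injective_nat κ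
  let e := hinf.natEmbedding
  choose rep hrep_free hrep using fun y : ↥(π '' {x | stabilizer G x = ⊥} \ π '' S) => y.2.1
  refine ⟨fun k => rep (e (ι k)), ?_, fun ⟨k, g⟩ hgk => (e (ι k)).2.2 ⟨_, hgk, ?_⟩⟩
  · rintro ⟨k, g⟩ ⟨k', g'⟩ (h : g • rep (e (ι k)) = g' • rep (e (ι k')))
    obtain rfl : k = k' := hι <| e.injective <| Subtype.ext <| by
      rw [← hrep, ← hrep, ← hπ g, h, hπ]
    have : g'⁻¹ * g ∈ stabilizer G (rep (e (ι k))) := by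
      rw [mem_stabilizer_iff, mul_smul, h, inv_smul_smul]
    rw [hrep_free, Subgroup.mem_bot, inv_mul_eq_one] at this
    rw [this]
  · rw [hπ, hrep]

theorem exists_injective_equivariant_addMonoidHom {ι : Type*} (c : ι ⊕ ι → X)
    (hc : Injective fun q : (ι ⊕ ι) × G => q.2 • c q.1) :
    ∃ j : ((ι × G) →₀ ℤ) →+ (X →₀ ℤ), Injective j ∧
      (∀ (σ : G) (v : (ι × G) →₀ ℤ),
        j (mapDomain (fun p => (p.1, σ * p.2)) v) = mapDomain (σ • ·) (j v)) ∧
      (∀ v, (∀ x, 0 ≤ j v x) → j v = 0) ∧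
      ∀ v x, (∀ q : (ι ⊕ ι) × G, q.2 • c q.1 ≠ x) → j v x = 0 := by
  let A : ι × G → X := fun q => q.2 • c (.inl q.1)
  let B : ι × G → X := fun q => q.2 • c (.inr q.1)
  let j := mapDomain.addMonoidHom (M := ℤ) A - mapDomain.addMonoidHom B
  have hA : Injective A := hc.comp (Sum.inl_injective.prodMap injective_id)
  have hB : Injective B := hc.comp (Sum.inr_injective.prodMap injective_id)
  have hAB : ∀ q q', A q ≠ B q' := fun q q' h => by
    simpa using @hc (.inl q.1, q.2) (.inr q'.1, q'.2) h
  have hjA : ∀ v q, j v (A q) = v q := mapDomain_sub_mapDomain_apply_left hA hAB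
  have hjB : ∀ v q, j v (B q) = -v q := fun v q => by
    change (mapDomain A v - mapDomain B v) (B q) = -v q
    rw [← neg_sub, coe_neg, Pi.neg_apply,
      mapDomain_sub_mapDomain_apply_left hB (fun q q' h => hAB q' q h.symm)]
  refine ⟨j, fun v w h => ?_, fun σ v => ?_, fun v hv => ?_, fun v x hx => ?_⟩
  · ext q
    rw [← hjA v, ← hjA w, h]
  · have hAσ : A ∘ (fun p => (p.1, σ * p.2)) = (σ • ·) ∘ A := funext fun q => mul_smul _ _ _
    have hBσ : B ∘ (fun p => (p.1, σ * p.2)) = (σ • ·) ∘ B := funext fun q => mul_smul _ _ _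
    simp only [j, AddMonoidHom.sub_apply, mapDomain.addMonoidHom_apply]
    rw [← mapDomain_comp, ← mapDomain_comp, hAσ, hBσ, mapDomain_comp, mapDomain_comp,
      mapDomain_sub]
  · suffices v = 0 by rw [this, map_zero]
    ext q
    have := hjA v q ▸ hv (A q)
    have := hjB v q ▸ hv (B q)
    simp only [coe_zero, Pi.zero_apply]
    omega
  · simp only [j, AddMonoidHom.sub_apply, mapDomain.addMonoidHom_apply]
    rw [coe_sub, Pi.sub_apply, mapDomain_of_notMem_range _ _ fun ⟨q, h⟩ => hx (.inl q.1, q.2) h,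
      mapDomain_of_notMem_range _ _ fun ⟨q, h⟩ => hx (.inr q.1, q.2) h, sub_zero]

end MulAction

theorem NumberField.exists_galRestrict_apply_ne_self (L : Type*) [Field L] [NumberField L] :
    ∃ θ : 𝓞 L, ∀ σ : L ≃ₐ[ℚ] L, σ ≠ 1 → galRestrict ℤ ℚ L (𝓞 L) σ θ ≠ θ := by
  obtain ⟨α, hα⟩ := Field.exists_primitive_element ℚ L
  obtain ⟨y, hy, hint⟩ := ((IsFractionRing.isAlgebraic_iff ℤ ℚ L).mpr
    (.of_finite ℚ α)).exists_integral_multiple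
  have hadj : Algebra.adjoin ℚ {α} = ⊤ := by
    rw [← IntermediateField.adjoin_simple_toSubalgebra_of_isAlgebraic (.of_finite ℚ α), hα,
      IntermediateField.top_toSubalgebra]
  refine ⟨⟨y • α, hint⟩, fun σ hσ h => hσ <| AlgEquiv.coe_toAlgHom_injective <|
    AlgHom.ext_of_adjoin_eq_top hadj (Set.eqOn_singleton.mpr ?_)⟩
  have := (algebraMap_galRestrict_apply ℤ σ _).symm.trans (congrArg (algebraMap (𝓞 L) L) h)
  simpa [hy] using this

section Galois

variable {L : Type*} [Field L] [NumberField L] [IsGalois ℚ L]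

theorem galPrime_one (P : HeightOneSpectrum (𝓞 L)) : galPrime L 1 P = P :=
  HeightOneSpectrum.ext <| by
    simp only [galPrime, map_one]
    exact Ideal.map_id _

theorem galPrime_mul (σ τ : L ≃ₐ[ℚ] L) (P : HeightOneSpectrum (𝓞 L)) :
    galPrime L (σ * τ) P = galPrime L σ (galPrime L τ P) :=
  HeightOneSpectrum.ext <| by
    simp only [galPrime, map_mul]
    exact (Ideal.map_mapₐ (galRestrict ℤ ℚ L (𝓞 L) τ : 𝓞 L →ₐ[ℤ] 𝓞 L)
      (galRestrict ℤ ℚ L (𝓞 L) σ : 𝓞 L →ₐ[ℤ] 𝓞 L)).symm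

noncomputable instance : MulAction (L ≃ₐ[ℚ] L) (HeightOneSpectrum (𝓞 L)) where
  smul := galPrime L
  one_smul := galPrime_one
  mul_smul := galPrime_mul

theorem IsDedekindDomain.HeightOneSpectrum.galRestrict_mem_smul {σ : L ≃ₐ[ℚ] L}
    {P : HeightOneSpectrum (𝓞 L)} {x : 𝓞 L} (hx : x ∈ P.asIdeal) :
    galRestrict ℤ ℚ L (𝓞 L) σ x ∈ (σ • P).asIdeal :=
  Ideal.mem_map_of_mem _ hx

variable (L)

theorem NumberField.exists_stabilizer_eq_bot_and_not_dvd {N : ℤ} (hN : N ≠ 0) :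
    ∃ (P : HeightOneSpectrum (𝓞 L)) (p : ℤ), P.asIdeal.under ℤ = Ideal.span {p} ∧ ¬p ∣ N ∧
      stabilizer (L ≃ₐ[ℚ] L) P = ⊥ := by
  classical
  obtain ⟨θ, hθ⟩ := exists_galRestrict_apply_ne_self L
  set D : ℤ := ∏ σ ∈ Finset.univ.erase 1,
    (Ideal.absNorm (Ideal.span {galRestrict ℤ ℚ L (𝓞 L) σ θ - θ}) : ℤ)
  have hD : D ≠ 0 := Finset.prod_ne_zero_iff.mpr fun σ hσ => by
    simpa [Ideal.absNorm_eq_zero_iff, sub_eq_zero] using hθ σ (Finset.ne_of_mem_erase hσ)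
  have hdeg : 0 < (Algebra.lmul ℤ (𝓞 L) θ).charpoly.natDegree := by
    rw [LinearMap.charpoly_natDegree, RingOfIntegers.rank]
    exact Module.finrank_pos
  obtain ⟨p, b, hp, hpND, hpb⟩ :=
    (Algebra.lmul ℤ (𝓞 L) θ).charpoly.exists_prime_not_dvd_dvd_eval hdeg (mul_ne_zero hN hD)
  rw [Algebra.eval_charpoly_lmul] at hpb
  obtain ⟨P, hPmax, hPp, hPdvd⟩ := Ideal.exists_isMaximal_dvd_of_dvd_absNorm hp
    (Ideal.span {algebraMap ℤ (𝓞 L) b - θ})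
    (by rwa [Ideal.absNorm_span_singleton, Int.natCast_natAbs, dvd_abs])
  let Q : HeightOneSpectrum (𝓞 L) :=
    ⟨P, hPmax.isPrime, Ideal.IsMaximal.ne_bot_of_isIntegral_int P⟩
  have hbθ : algebraMap ℤ (𝓞 L) b - θ ∈ Q.asIdeal :=
    Ideal.le_of_dvd hPdvd (Ideal.mem_span_singleton_self _)
  refine ⟨Q, p, hPp, fun h => hpND (h.mul_right D),
    (Subgroup.eq_bot_iff_forall _).mpr fun σ hσ => ?_⟩
  by_contra hσ1
  have hσθ : galRestrict ℤ ℚ L (𝓞 L) σ θ - θ ∈ Q.asIdeal := by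
    have h := HeightOneSpectrum.galRestrict_mem_smul (σ := σ) hbθ
    rw [mem_stabilizer_iff.mp hσ, map_sub, AlgEquiv.commutes] at h
    simpa using Q.asIdeal.sub_mem hbθ h
  refine hpND (dvd_mul_of_dvd_right ?_ N)
  exact (Ideal.dvd_absNorm_of_le_of_under_eq hPp
      (Ideal.span_le.mpr (by simpa using hσθ))).trans
    (Finset.dvd_prod_of_mem _ (Finset.mem_erase.mpr ⟨hσ1, Finset.mem_univ σ⟩))

theorem NumberField.infinite_setOf_stabilizer_eq_bot :
    {P : HeightOneSpectrum (𝓞 L) | stabilizer (L ≃ₐ[ℚ] L) P = ⊥}.Infinite := by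
  intro hfin
  set N : ℤ := ∏ P ∈ hfin.toFinset, (Ideal.absNorm P.asIdeal : ℤ)
  have hN : N ≠ 0 := Finset.prod_ne_zero_iff.mpr fun P _ => by
    simpa [Ideal.absNorm_eq_zero_iff] using P.ne_bot
  obtain ⟨P, p, hPp, hpN, hP⟩ := exists_stabilizer_eq_bot_and_not_dvd L hN
  exact hpN ((Ideal.dvd_absNorm_of_le_of_under_eq hPp le_rfl).trans
    (Finset.dvd_prod_of_mem _ (hfin.mem_toFinset.mpr hP)))

end Galois

theorem exists_free_galois_submodule_of_fractional_ideals_general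
    (L : Type*) [Field L] [NumberField L] [IsGalois ℚ L]
    (S : Finset (HeightOneSpectrum (𝓞 L))) (r : ℕ) :
    ∃ j : ((Fin r × (L ≃ₐ[ℚ] L)) →₀ ℤ) →+ (HeightOneSpectrum (𝓞 L) →₀ ℤ),
      Function.Injective j ∧
      (∀ (σ : L ≃ₐ[ℚ] L) (v : (Fin r × (L ≃ₐ[ℚ] L)) →₀ ℤ),
        j (Finsupp.mapDomain (fun p => (p.1, σ * p.2)) v) =
          Finsupp.mapDomain (galPrime L σ) (j v)) ∧
      (∀ v, (∀ π, 0 ≤ j v π) → j v = 0) ∧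
      (∀ v, ∀ π ∈ S, j v π = 0) := by
  obtain ⟨c, hc, hcS⟩ := exists_injective_smul_of_infinite (κ := Fin r ⊕ Fin r)
    (infinite_setOf_stabilizer_eq_bot L) S.finite_toSet
  obtain ⟨j, hj, hequiv, hpos, hsupp⟩ := exists_injective_equivariant_addMonoidHom c hc
  exact ⟨j, hj, hequiv, hpos, fun v P hP => hsupp v P fun q hq => hcS q (hq ▸ hP)⟩

/-- Let `L/ℚ` be Galois with group `G`, `𝒫` the set of nonzero prime
ideals of its ring of integers, `ℐ ≅ 𝒫 →₀ ℤ` the group of fractional ideals (the free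
abelian group on `𝒫`, an ideal being integral exactly when all its exponents are `≥ 0`),
`S ⊆ 𝒫` finite and `r > 0`.  Then `ℐ` contains a free `ℤ[G]`-submodule of rank `r`
(encoded as the range of an injective `G`-equivariant homomorphism `j` from
`ℤ[G]^r = (Fin r × G) →₀ ℤ`) such that (i) the only integral ideal in it is the unit
ideal, and (ii) no prime of `S` occurs in the factorization of any of its members. -/
theorem exists_free_galois_submodule_of_fractional_ideals
    (L : Type*) [Field L] [NumberField L] [IsGalois ℚ L]
    (S : Finset (HeightOneSpectrum (𝓞 L))) (r : ℕ) (hr : 0 < r) :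
    ∃ j : ((Fin r × (L ≃ₐ[ℚ] L)) →₀ ℤ) →+ (HeightOneSpectrum (𝓞 L) →₀ ℤ),
      Function.Injective j ∧
      (∀ (σ : L ≃ₐ[ℚ] L) (v : (Fin r × (L ≃ₐ[ℚ] L)) →₀ ℤ),
        j (Finsupp.mapDomain (fun p => (p.1, σ * p.2)) v) =
          Finsupp.mapDomain (galPrime L σ) (j v)) ∧
      (∀ v, (∀ π, 0 ≤ j v π) → j v = 0) ∧
      (∀ v, ∀ π ∈ S, j v π = 0) :=
  exists_free_galois_submodule_of_fractional_ideals_general L S r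
end

section
/- Let 𝔫 be a finite-dimensional Lie algebra over ℚ, let f be a Lie algebra automorphism of 𝔫, and let f̄ denote the base change of f to the Lie algebra ℚ̄ ⊗_ℚ 𝔫 over an algebraic closure ℚ̄ of ℚ. Then there exists a grading ℚ̄ ⊗_ℚ 𝔫 = ⊕_{k ∈ ℤ} 𝔫_k such that f̄(𝔫_k) = 𝔫_k for all k ∈ ℤ and every eigenvalue of the restriction of f̄ to 𝔫_0 is a root of unity. In particular, if no eigenvalue of f (in ℚ̄) is a root of unity, then ℚ̄ ⊗_ℚ 𝔫 admits a very special grading. -/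
open TensorProduct

/-- A (ℤ-)grading of a Lie algebra `𝔪` over `K`: a direct sum decomposition
`𝔪 = ⊕_{k ∈ ℤ} 𝔪ₖ` with `⁅𝔪ᵢ, 𝔪ⱼ⁆ ⊆ 𝔪ᵢ₊ⱼ`. -/
def IsLieGrading (K 𝔪 : Type*) [CommRing K] [LieRing 𝔪] [LieAlgebra K 𝔪]
    (p : ℤ → Submodule K 𝔪) : Prop :=
  DirectSum.IsInternal p ∧
    ∀ (i j : ℤ), ∀ x ∈ p i, ∀ y ∈ p j, ⁅x, y⁆ ∈ p (i + j)

/-- A Lie algebra admits a *special* grading if it has a grading with `𝔪₀ ∩ 𝔷 = 0`,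
where `𝔷` is the center. -/
def HasSpecialGrading (K 𝔪 : Type*) [CommRing K] [LieRing 𝔪] [LieAlgebra K 𝔪] : Prop :=
  ∃ p : ℤ → Submodule K 𝔪, IsLieGrading K 𝔪 p ∧
    p 0 ⊓ (LieAlgebra.center K 𝔪).toSubmodule = ⊥

/-- A Lie algebra admits a *very special* grading if it has a grading with `𝔪₀ = 0`. -/
def HasVerySpecialGrading (K 𝔪 : Type*) [CommRing K] [LieRing 𝔪] [LieAlgebra K 𝔪] : Prop :=
  ∃ p : ℤ → Submodule K 𝔪, IsLieGrading K 𝔪 p ∧ p 0 = ⊥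

/-- A Lie algebra admits a *non-negative special* grading if it has a grading with
`𝔪ₖ = 0` for `k < 0` and `𝔪₀ ∩ 𝔷 = 0`. -/
def HasNonnegSpecialGrading (K 𝔪 : Type*) [CommRing K] [LieRing 𝔪] [LieAlgebra K 𝔪] : Prop :=
  ∃ p : ℤ → Submodule K 𝔪, IsLieGrading K 𝔪 p ∧ (∀ k < 0, p k = ⊥) ∧
    p 0 ⊓ (LieAlgebra.center K 𝔪).toSubmodule = ⊥

/-- A Lie algebra admits a *positive* grading if it has a grading with
`𝔪ₖ = 0` for `k ≤ 0`. -/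
def HasPositiveGrading (K 𝔪 : Type*) [CommRing K] [LieRing 𝔪] [LieAlgebra K 𝔪] : Prop :=
  ∃ p : ℤ → Submodule K 𝔪, IsLieGrading K 𝔪 p ∧ ∀ k ≤ 0, p k = ⊥

/-!
The generalized eigenspaces of `f̄` decompose `ℚ̄ ⊗ 𝔫`, and since `f̄` is a Lie automorphism the
bracket sends the `c`- and `d`-eigenspaces into the `cd`-eigenspace. The eigenvalues are finitely
many and nonzero, so they generate a finitely generated abelian group; its torsion-free quotient is
free, and a suitable homomorphism `χ` from it to `ℤ` vanishes on no eigenvalue that is not a root of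
unity. Grouping the eigenspaces along the fibres of `χ` gives the required `ℤ`-grading.
-/

open Polynomial in
theorem Polynomial.exists_forall_eval_ne_zero {R ι : Type*} [CommRing R] [IsDomain R] [Infinite R]
    (s : Finset ι) (p : ι → R[X]) (hp : ∀ i ∈ s, p i ≠ 0) :
    ∃ c : R, ∀ i ∈ s, (p i).eval c ≠ 0 := by
  have hprod : ∏ i ∈ s, p i ≠ 0 := Finset.prod_ne_zero_iff.mpr hp
  by_contra! h
  refine hprod (funext fun c => ?_)
  obtain ⟨i, hi, hc⟩ := h c
  rw [eval_prod, eval_zero]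
  exact Finset.prod_eq_zero hi hc

open Polynomial in
theorem Module.Projective.exists_dual_forall_apply_ne_zero {R M : Type*} [CommRing R] [IsDomain R]
    [Infinite R] [AddCommGroup M] [Module R M] [Module.Projective R M] (s : Finset M)
    (hs : ∀ x ∈ s, x ≠ 0) : ∃ φ : Module.Dual R M, ∀ x ∈ s, φ x ≠ 0 := by
  classical
  induction s using Finset.induction_on with
  | empty => exact ⟨0, by simp⟩
  | insert y s _ ih =>
    obtain ⟨φ, hφ⟩ := ih fun x hx => hs x (Finset.mem_insert_of_mem hx)
    obtain ⟨ψ, hψ⟩ := Module.Projective.exists_dual_ne_zero R (hs y (Finset.mem_insert_self y s))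
    -- `φ + c • ψ` works unless `c` is a root of one of these nonzero linear polynomials
    obtain ⟨c, hc⟩ := exists_forall_eval_ne_zero (insert y s)
      (fun x => C (φ x) + C (ψ x) * X) fun x hx h => by
        have h0 := congrArg (coeff · 0) h
        have h1 := congrArg (coeff · 1) h
        simp at h0 h1
        rcases Finset.mem_insert.mp hx with rfl | hx
        · exact hψ h1
        · exact hφ x hx h0
    refine ⟨φ + c • ψ, fun x hx => ?_⟩
    have hcx := hc x hx
    rwa [eval_add, eval_mul, eval_C, eval_C, eval_X, mul_comm, ← smul_eq_mul] at hcx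

theorem Module.exists_dual_forall_apply_ne_zero_of_notMem_torsion {R M : Type*} [CommRing R]
    [IsDomain R] [IsPrincipalIdealRing R] [Infinite R] [AddCommGroup M] [Module R M]
    [Module.Finite R M] {s : Set M} (hs : s.Finite) (hst : ∀ x ∈ s, x ∉ Submodule.torsion R M) :
    ∃ φ : Module.Dual R M, ∀ x ∈ s, φ x ≠ 0 := by
  let q := (Submodule.torsion R M).mkQ
  obtain ⟨ψ, hψ⟩ := Module.Projective.exists_dual_forall_apply_ne_zero (R := R)
    (hs.image q).toFinset (by simpa [q, Submodule.Quotient.mk_eq_zero] using hst)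
  exact ⟨ψ ∘ₗ q, fun x hx => hψ (q x) (by simpa using ⟨x, hx, rfl⟩)⟩

theorem exists_map_mul_eq_add_of_isUnit {M : Type*} [CommMonoid M] {s : Set M} (hs : s.Finite)
    (hsu : ∀ a ∈ s, IsUnit a) :
    ∃ χ : M → ℤ, (∀ a ∈ s, ∀ b ∈ s, χ (a * b) = χ a + χ b) ∧
      ∀ a ∈ s, ¬ IsOfFinOrder a → χ a ≠ 0 := by
  let H := Subgroup.closure (Units.val ⁻¹' s)
  have : Finite (Units.val ⁻¹' s) := (hs.preimage Units.val_injective.injOn).to_subtype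
  have : Module.Finite ℤ (Additive H) := Module.Finite.iff_addGroup_fg.mpr inferInstance
  let v : H →* M := (Units.coeHom M).comp H.subtype
  have hv : Function.Injective v := Units.val_injective.comp Subtype.val_injective
  let T : Set (Additive H) := Additive.ofMul '' {u | v u ∈ s ∧ ¬ IsOfFinOrder u}
  have hT : T.Finite := ((hs.preimage hv.injOn).subset fun u hu => hu.1).image _
  obtain ⟨φ, hφ⟩ := Module.exists_dual_forall_apply_ne_zero_of_notMem_torsion (R := ℤ) hT <| by
    rintro _ ⟨u, ⟨-, hu⟩, rfl⟩ htors
    rw [← SetLike.mem_coe, ← Submodule.coe_toAddSubgroup, Submodule.torsion_int] at htors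
    exact hu (isOfFinAddOrder_ofMul_iff.mp htors)
  let χ : M → ℤ := Function.extend v (fun u => φ (Additive.ofMul u)) 0
  have hχ : ∀ u, χ (v u) = φ (Additive.ofMul u) := hv.extend_apply _ _
  have hsv : ∀ a ∈ s, ∃ u, v u = a := fun a ha => by
    obtain ⟨a, rfl⟩ := hsu a ha
    exact ⟨⟨a, Subgroup.subset_closure ha⟩, rfl⟩
  refine ⟨χ, fun a ha b hb => ?_, fun a ha ha' => ?_⟩
  · obtain ⟨u, rfl⟩ := hsv a ha
    obtain ⟨w, rfl⟩ := hsv b hb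
    rw [← map_mul, hχ, hχ, hχ, ofMul_mul, map_add]
  · obtain ⟨u, rfl⟩ := hsv a ha
    rw [hχ]
    exact hφ _ ⟨u, ⟨ha, fun hu => ha' (hv.isOfFinOrder_iff.mpr hu)⟩, rfl⟩

namespace Module.End

section Bilinear

variable {R M N P : Type*} [CommRing R] [AddCommGroup M] [Module R M] [AddCommGroup N] [Module R N]
  [AddCommGroup P] [Module R P] {B : M →ₗ[R] N →ₗ[R] P} {f : End R M} {g : End R N} {h : End R P}

theorem apply_mem_genEigenspace_add (hB : ∀ x y, h (B x y) = B (f x) (g y)) (μ ν : R) (m n : ℕ)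
    {x : M} {y : N} (hx : x ∈ f.genEigenspace μ m) (hy : y ∈ g.genEigenspace ν n) :
    B x y ∈ h.genEigenspace (μ * ν) ↑(m + n) := by
  induction m generalizing n x y with
  | zero =>
    rw [mem_genEigenspace_nat, pow_zero, LinearMap.mem_ker, one_apply] at hx
    simp [hx]
  | succ m ihm =>
    induction n generalizing y with
    | zero =>
      rw [mem_genEigenspace_nat, pow_zero, LinearMap.mem_ker, one_apply] at hy
      simp [hy]
    | succ n ihn =>
      have hfx : (f - μ • 1) x ∈ f.genEigenspace μ m := by
        rw [mem_genEigenspace_nat] at hx ⊢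
        rwa [LinearMap.mem_ker, ← mul_apply, ← pow_succ]
      have hgy : (g - ν • 1) y ∈ g.genEigenspace ν n := by
        rw [mem_genEigenspace_nat] at hy ⊢
        rwa [LinearMap.mem_ker, ← mul_apply, ← pow_succ]
      have hgy' : g y ∈ g.genEigenspace ν ↑(n + 1) :=
        mapsTo_genEigenspace_of_comm (Commute.refl g) ν _ hy
      have leibniz : (h - (μ * ν) • 1) (B x y) =
          B ((f - μ • 1) x) (g y) + μ • B x ((g - ν • 1) y) := by
        simp only [LinearMap.sub_apply, LinearMap.smul_apply, one_apply, hB, map_sub, map_smul,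
          smul_sub, mul_smul]
        abel
      have h₁ := ihm (n + 1) hfx hgy'
      have h₂ := ihn hgy
      rw [mem_genEigenspace_nat, LinearMap.mem_ker] at h₁ h₂ ⊢
      rw [show m + 1 + (n + 1) = m + (n + 1) + 1 by omega, pow_succ, mul_apply, leibniz, map_add,
        map_smul, h₁, show m + (n + 1) = m + 1 + n by omega, h₂, smul_zero, add_zero]

theorem apply_mem_maxGenEigenspace_mul (hB : ∀ x y, h (B x y) = B (f x) (g y)) {μ ν : R} {x : M}
    {y : N} (hx : x ∈ f.maxGenEigenspace μ) (hy : y ∈ g.maxGenEigenspace ν) :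
    B x y ∈ h.maxGenEigenspace (μ * ν) := by
  obtain ⟨m, hm⟩ := (mem_maxGenEigenspace f μ x).mp hx
  obtain ⟨n, hn⟩ := (mem_maxGenEigenspace g ν y).mp hy
  exact genEigenspace_le_maximal h _ _ <| apply_mem_genEigenspace_add hB μ ν m n
    (mem_genEigenspace_nat.mpr hm) (mem_genEigenspace_nat.mpr hn)

end Bilinear

theorem lie_mem_maxGenEigenspace_mul {K L : Type*} [CommRing K] [LieRing L] [LieAlgebra K L]
    {F : End K L} (hF : ∀ x y, F ⁅x, y⁆ = ⁅F x, F y⁆) {μ ν : K} {x y : L}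
    (hx : x ∈ F.maxGenEigenspace μ) (hy : y ∈ F.maxGenEigenspace ν) :
    ⁅x, y⁆ ∈ F.maxGenEigenspace (μ * ν) :=
  apply_mem_maxGenEigenspace_mul (B := (LieModule.toEnd K L L : L →ₗ[K] L →ₗ[K] L)) hF hx hy

variable {R M : Type*} [CommRing R] [AddCommGroup M] [Module R M] {f : End R M}

theorem map_maxGenEigenspace_of_bijective (hf : Function.Bijective f) (μ : R) :
    (f.maxGenEigenspace μ).map f = f.maxGenEigenspace μ := by
  let e := LinearEquiv.ofBijective f hf
  have hcomm : Commute f (e.symm : End R M) :=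
    LinearMap.ext fun x => (e.apply_symm_apply x).trans (e.symm_apply_apply x).symm
  refine le_antisymm ?_ fun x hx => ⟨e.symm x, ?_, e.apply_symm_apply x⟩
  · rintro _ ⟨x, hx, rfl⟩
    exact mapsTo_genEigenspace_of_comm (Commute.refl f) μ ⊤ hx
  · exact mapsTo_genEigenspace_of_comm hcomm μ ⊤ hx

theorem HasEigenvalue.ne_zero_of_injective [Nontrivial R] {μ : R} (hμ : f.HasEigenvalue μ)
    (hf : Function.Injective f) : μ ≠ 0 := by
  rintro rfl
  obtain ⟨x, hx⟩ := hμ.exists_hasEigenvector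
  exact hx.2 (hf (by rw [hx.apply_eq_smul, zero_smul, map_zero]))

theorem HasEigenvector.mem_of_mem_biSup_maxGenEigenspace [IsDomain R] [Module.IsTorsionFree R M]
    {μ : R} {x : M} (hx : f.HasEigenvector μ x) {s : Set R}
    (hxs : x ∈ ⨆ a ∈ s, f.maxGenEigenspace a) : μ ∈ s := by
  by_contra hμ
  have hdisj := f.independent_maxGenEigenspace.disjoint_biSup hμ
  exact hx.2 (Submodule.disjoint_def.mp hdisj x (eigenspace_le_maxGenEigenspace hx.1) hxs)

end Module.End

theorem DirectSum.IsInternal.biSup_fiber {R M ι κ : Type*} [Ring R] [AddCommGroup M] [Module R M]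
    [DecidableEq ι] [DecidableEq κ] {p : ι → Submodule R M} (hp : DirectSum.IsInternal p)
    (g : ι → κ) : DirectSum.IsInternal fun k => ⨆ i ∈ g ⁻¹' {k}, p i := by
  rw [DirectSum.isInternal_submodule_iff_iSupIndep_and_iSup_eq_top] at hp ⊢
  refine ⟨fun k => ?_, ?_⟩
  · refine (hp.1.disjoint_biSup_biSup (t := {i | g i ≠ k}) ?_).mono_right ?_
    · exact Set.disjoint_left.mpr fun i hi hi' => hi' hi
    · exact iSup₂_le fun k' hk' => biSup_mono fun i (hi : g i = k') => by rwa [← hi] at hk'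
  · rw [← hp.2, iSup_comm]
    simp

theorem isLieGrading_biSup_fiber {K L ι : Type*} [CommRing K] [LieRing L] [LieAlgebra K L]
    [DecidableEq ι] [Mul ι] {E : ι → Submodule K L} (hE : DirectSum.IsInternal E)
    (hbr : ∀ a b, ∀ x ∈ E a, ∀ y ∈ E b, ⁅x, y⁆ ∈ E (a * b)) (χ : ι → ℤ)
    (hχ : ∀ a b, E a ≠ ⊥ → E b ≠ ⊥ → χ (a * b) = χ a + χ b) :
    IsLieGrading K L fun k => ⨆ a ∈ χ ⁻¹' {k}, E a := by
  refine ⟨hE.biSup_fiber χ, fun i j x hx y hy => ?_⟩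
  let B : L →ₗ[K] L →ₗ[K] L := LieModule.toEnd K L L
  suffices Submodule.map₂ B (⨆ a ∈ χ ⁻¹' {i}, E a) (⨆ b ∈ χ ⁻¹' {j}, E b) ≤
      ⨆ c ∈ χ ⁻¹' {i + j}, E c from this (Submodule.apply_mem_map₂ B hx hy)
  simp only [Submodule.map₂_iSup_left, Submodule.map₂_iSup_right, iSup_le_iff,
    Submodule.map₂_le]
  intro b (hb : χ b = j) a (ha : χ a = i) x hx y hy
  rcases eq_or_ne (E a) ⊥ with ha0 | ha0
  · simp [(Submodule.eq_bot_iff _).mp ha0 x hx, B]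
  rcases eq_or_ne (E b) ⊥ with hb0 | hb0
  · simp [(Submodule.eq_bot_iff _).mp hb0 y hy, B]
  refine Submodule.mem_iSup_of_mem (a * b) (Submodule.mem_iSup_of_mem ?_ (hbr a b x hx y hy))
  rw [Set.mem_preimage, hχ a b ha0 hb0, ha, hb, Set.mem_singleton_iff]

theorem LinearMap.baseChange_lie {R A L L' : Type*} [CommRing R] [CommRing A] [Algebra R A]
    [LieRing L] [LieAlgebra R L] [LieRing L'] [LieAlgebra R L'] (f : L →ₗ⁅R⁆ L')
    (x y : A ⊗[R] L) :
    f.toLinearMap.baseChange A ⁅x, y⁆ =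
      ⁅f.toLinearMap.baseChange A x, f.toLinearMap.baseChange A y⁆ :=
  (LieAlgebra.ExtendScalars.map (AlgHom.id R A) f).map_lie x y

/-- Let `𝔫` be a finite-dimensional Lie algebra over `ℚ` and `f` a Lie
algebra automorphism of `𝔫`, with base change `f̄` to an algebraic closure `ℚ̄` of `ℚ`.
Then there is a grading `ℚ̄ ⊗ 𝔫 = ⊕ₖ 𝔫ₖ` with `f̄(𝔫ₖ) = 𝔫ₖ` for all `k` such that every
eigenvalue of the restriction of `f̄` to `𝔫₀` is a root of unity.  In particular, if no
eigenvalue of `f` is a root of unity then `ℚ̄ ⊗ 𝔫` admits a very special grading. -/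
theorem exists_invariant_grading_of_lieAut
    {𝔫 : Type*} [LieRing 𝔫] [LieAlgebra ℚ 𝔫] [FiniteDimensional ℚ 𝔫]
    (f : 𝔫 ≃ₗ⁅ℚ⁆ 𝔫) :
    (∃ p : ℤ → Submodule (AlgebraicClosure ℚ) ((AlgebraicClosure ℚ) ⊗[ℚ] 𝔫),
      IsLieGrading (AlgebraicClosure ℚ) ((AlgebraicClosure ℚ) ⊗[ℚ] 𝔫) p ∧
      (∀ k : ℤ, Submodule.map
          (LinearMap.baseChange (AlgebraicClosure ℚ) f.toLieHom.toLinearMap) (p k) = p k) ∧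
      (∀ μ : AlgebraicClosure ℚ,
        (∃ x ∈ p 0, x ≠ 0 ∧
            LinearMap.baseChange (AlgebraicClosure ℚ) f.toLieHom.toLinearMap x = μ • x) →
          ∃ n : ℕ, 0 < n ∧ μ ^ n = 1)) ∧
    ((∀ μ : AlgebraicClosure ℚ,
        Module.End.HasEigenvalue
          (LinearMap.baseChange (AlgebraicClosure ℚ) f.toLieHom.toLinearMap) μ →
          ¬ ∃ n : ℕ, 0 < n ∧ μ ^ n = 1) →
      HasVerySpecialGrading (AlgebraicClosure ℚ) ((AlgebraicClosure ℚ) ⊗[ℚ] 𝔫)) := by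
  classical
  set F : Module.End (AlgebraicClosure ℚ) _ :=
    LinearMap.baseChange (AlgebraicClosure ℚ) f.toLieHom.toLinearMap
  have hF : Function.Bijective F :=
    (f.toLinearEquiv.baseChange ℚ (AlgebraicClosure ℚ) 𝔫 𝔫).bijective
  let E := F.maxGenEigenspace
  have hE : DirectSum.IsInternal E :=
    (DirectSum.isInternal_submodule_iff_iSupIndep_and_iSup_eq_top E).mpr
      ⟨F.independent_maxGenEigenspace, F.iSup_maxGenEigenspace_eq_top⟩
  have hbr : ∀ a b, ∀ x ∈ E a, ∀ y ∈ E b, ⁅x, y⁆ ∈ E (a * b) := fun a b x hx y hy =>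
    Module.End.lie_mem_maxGenEigenspace_mul (LinearMap.baseChange_lie f.toLieHom) hx hy
  have hES : ∀ a, E a ≠ ⊥ → F.HasEigenvalue a := fun a h =>
    (Module.End.hasUnifEigenvalue_iff_hasUnifEigenvalue_one (by simp)).mp h
  obtain ⟨χ, hadd, hne⟩ := exists_map_mul_eq_add_of_isUnit F.finite_hasEigenvalue
    fun a ha => isUnit_iff_ne_zero.mpr (Module.End.HasEigenvalue.ne_zero_of_injective ha hF.1)
  have hroot : ∀ a, F.HasEigenvalue a → χ a = 0 → ∃ n, 0 < n ∧ a ^ n = 1 := fun a ha h0 =>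
    isOfFinOrder_iff_pow_eq_one.mp (not_not.mp fun h => hne a ha h h0)
  have hgr := isLieGrading_biSup_fiber hE hbr χ fun a b ha hb => hadd a (hES a ha) b (hES b hb)
  refine ⟨⟨_, hgr, fun k => ?_, fun μ ⟨x, hx, hx0, hFx⟩ => ?_⟩, fun hnroot => ⟨_, hgr, ?_⟩⟩
  · simp only [Submodule.map_iSup, E, Module.End.map_maxGenEigenspace_of_bijective hF]
  · have hv : F.HasEigenvector μ x := ⟨Module.End.mem_eigenspace_iff.mpr hFx, hx0⟩
    exact hroot μ (Module.End.hasEigenvalue_of_hasEigenvector hv)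
      (Module.End.HasEigenvector.mem_of_mem_biSup_maxGenEigenspace hv hx)
  · refine iSup₂_eq_bot.mpr fun a (ha : χ a = 0) => by_contra fun h => ?_
    exact hnroot a (hES a h) (hroot a (hES a h) ha)
end

section
/- Let 𝔫 be a finite-dimensional Lie algebra over ℚ, and let ℚ̄ be an algebraic closure of ℚ. Then: (i) the Lie algebra ℂ ⊗_ℚ 𝔫 admits a special grading if and only if ℚ̄ ⊗_ℚ 𝔫 admits a special grading; and (ii) the Lie algebra ℂ ⊗_ℚ 𝔫 admits a very special grading if and only if ℚ̄ ⊗_ℚ 𝔫 admits a very special grading. -/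
open TensorProduct

/-!
In a basis `b` of `K ⊗ 𝔫` coming from a basis of `𝔫`, a grading is recorded by the matrices
`P s` of the projections onto its graded pieces: finitely many orthogonal idempotents summing to
`1`, subject to polynomial equations whose coefficients are the rational structure constants of
`𝔫`. The condition `𝔪₀ ∩ 𝔷 = 0` says that `x ↦ ((1 - P 0) x, (⁅b d, x⁆)_d)` is injective, i.e.
has a left inverse, which is again a polynomial condition. The entries of a solution in one
algebraically closed field containing `ℚ` generate a finitely generated `ℚ`-algebra, which by the
weak Nullstellensatz maps to any other such field, carrying the solution along.
-/

theorem Algebra.FiniteType.nonempty_algHom_of_isAlgClosed (k A K : Type*) [Field k] [CommRing A]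
    [Nontrivial A] [Algebra k A] [Algebra.FiniteType k A] [Field K] [IsAlgClosed K]
    [Algebra k K] : Nonempty (A →ₐ[k] K) := by
  obtain ⟨m, hm⟩ := Ideal.exists_maximal A
  let := Ideal.Quotient.field m
  have := finite_of_finite_type_of_isJacobsonRing k (A ⧸ m)
  exact ⟨IsAlgClosed.lift.comp (Ideal.Quotient.mkₐ k m)⟩

section Idempotents

variable {R M I : Type*} [Ring R] [AddCommGroup M] [Module R M] [DecidableEq I]

theorem OrthogonalIdempotents.isInternal_range {π : I → Module.End R M}
    (hπ : OrthogonalIdempotents π) {S : Finset I} (hS : ∑ i ∈ S, π i = 1) :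
    DirectSum.IsInternal fun i => LinearMap.range (π i) := by
  refine DirectSum.isInternal_submodule_of_iSupIndep_of_iSup_eq_top ?_ ?_
  · refine fun i => Submodule.disjoint_def.mpr fun x hxi hx => ?_
    have hker : (⨆ j, ⨆ (_ : j ≠ i), LinearMap.range (π j)) ≤ LinearMap.ker (π i) := by
      refine iSup₂_le fun j hji => ?_
      rintro _ ⟨y, rfl⟩
      rw [LinearMap.mem_ker, ← Module.End.mul_apply, hπ.ortho hji.symm, LinearMap.zero_apply]
    rw [← (LinearMap.IsIdempotentElem.mem_range_iff (hπ.idem i)).mp hxi]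
    exact hker hx
  · refine eq_top_iff.mpr fun x _ => ?_
    have hx : x = ∑ i ∈ S, π i x := by rw [← LinearMap.sum_apply, hS, Module.End.one_apply]
    rw [hx]
    exact Submodule.sum_mem _ fun i _ => Submodule.mem_iSup_of_mem i (LinearMap.mem_range_self _ x)

theorem DirectSum.IsInternal.exists_orthogonalIdempotents {p : I → Submodule R M}
    (hp : DirectSum.IsInternal p) {S : Finset I} (hS : ∀ i ∉ S, p i = ⊥) :
    ∃ π : I → Module.End R M, OrthogonalIdempotents π ∧ (∀ i, LinearMap.range (π i) = p i) ∧
      ∑ i ∈ S, π i = 1 := by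
  let := hp.chooseDecomposition
  let π i : Module.End R M := (p i).subtype ∘ₗ DirectSum.component R I (fun i => p i) i ∘ₗ
    (DirectSum.decomposeLinearEquiv p).toLinearMap
  have hπ_mem i x : π i x ∈ p i := (DirectSum.decompose p x i).2
  have hπ_of_mem {i j x} (hx : x ∈ p j) : π i x = if j = i then x else 0 := by
    split_ifs with h
    · subst h; exact DirectSum.decompose_of_mem_same p hx
    · exact DirectSum.decompose_of_mem_ne p hx h
  have hrange i : LinearMap.range (π i) = p i := by
    refine le_antisymm (LinearMap.range_le_iff_comap.mpr (eq_top_iff.mpr fun x _ => hπ_mem i x))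
      fun x hx => ⟨x, by simpa using hπ_of_mem (i := i) hx⟩
  refine ⟨π, OrthogonalIdempotents.iff_mul_eq.mpr fun i j => ?_, hrange, ?_⟩
  · ext x
    rw [Module.End.mul_apply, hπ_of_mem (hπ_mem j x)]
    obtain rfl | h := eq_or_ne i j
    · simp
    · simp [h, h.symm]
  · refine (LinearMap.eqLocus_eq_top.mp (eq_top_iff.mpr ?_))
    rw [← hp.submodule_iSup_eq_top]
    refine iSup_le fun i x hx => ?_
    rw [LinearMap.mem_eqLocus, LinearMap.sum_apply, Module.End.one_apply]
    simp only [hπ_of_mem hx, Finset.sum_ite_eq]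
    split_ifs with h
    · rfl
    · simpa [hS i h, eq_comm] using hx

end Idempotents

theorem Module.End.exists_sum_mul_eq_one_iff {K V J : Type*} [DivisionRing K] [AddCommGroup V]
    [Module K V] [Fintype J] (f : J → Module.End K V) :
    (∃ g : J → Module.End K V, ∑ j, g j * f j = 1) ↔ ∀ x, (∀ j, f j x = 0) → x = 0 := by
  classical
  refine ⟨fun ⟨g, hg⟩ x hx => ?_, fun h => ?_⟩
  · simpa [hx, eq_comm] using LinearMap.congr_fun hg x
  · obtain ⟨G, hG⟩ := (LinearMap.pi f).exists_leftInverse_of_injective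
      (LinearMap.ker_eq_bot'.mpr fun x hx => h x (congr_fun hx))
    refine ⟨fun j => G ∘ₗ LinearMap.single K (fun _ => V) j, LinearMap.ext fun x => ?_⟩
    have hsum : ∑ j, Pi.single j (f j x) = LinearMap.pi f x := Finset.univ_sum_single _
    simpa [← map_sum, hsum] using LinearMap.congr_fun hG x

section GradingMatrices

variable {ι R R' : Type*} [Fintype ι] [DecidableEq ι] [CommRing R] [CommRing R']

/-- If `C d` is the matrix of `ad` of the `d`-th basis vector, `adCol C M a` is the matrix of
`ad` of the vector whose coordinates are the `a`-th column of `M`. -/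
def adCol (C : ι → Matrix ι ι R) (M : Matrix ι ι R) (a : ι) : Matrix ι ι R :=
  ∑ d, M d a • C d

theorem mapMatrix_adCol (φ : R →+* R') (C : ι → Matrix ι ι R) (M : Matrix ι ι R) (a : ι) :
    φ.mapMatrix (adCol C M a) = adCol (φ.mapMatrix ∘ C) (φ.mapMatrix M) a := by
  simp [adCol, map_sum, Matrix.map_smul' _ _ _ (map_mul φ)]

/-- `P s` is the matrix of the projection onto the degree `s` part of a grading supported in
`S`, and `C d` that of `ad` of the `d`-th basis vector; `mul_adCol_mul` is `⁅𝔪ᵢ, 𝔪ⱼ⁆ ⊆ 𝔪ᵢ₊ⱼ`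
tested on the columns of `P i`, which span `𝔪ᵢ`. -/
structure IsGradingMatrices (C : ι → Matrix ι ι R) (S : Finset ℤ) (P : ℤ → Matrix ι ι R) :
    Prop where
  orthogonalIdempotents : OrthogonalIdempotents P
  sum_eq_one : ∑ s ∈ S, P s = 1
  mul_adCol_mul : ∀ i j a, P (i + j) * adCol C (P i) a * P j = adCol C (P i) a * P j

/-- The matrices `B₀, B d` exhibit the map `x ↦ ((1 - P 0) x, ⁅b d, x⁆)_d` as left invertible,
i.e. injective: this is the condition `𝔪₀ ∩ 𝔷 = 0`. -/
def HasSpecialGradingMatrices (C : ι → Matrix ι ι R) (S : Finset ℤ) : Prop :=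
  ∃ P, IsGradingMatrices C S P ∧
    ∃ (B₀ : Matrix ι ι R) (B : ι → Matrix ι ι R), B₀ * (1 - P 0) + ∑ d, B d * C d = 1

variable {C : ι → Matrix ι ι R} {S : Finset ℤ} {P : ℤ → Matrix ι ι R}

theorem IsGradingMatrices.eq_zero_of_notMem (h : IsGradingMatrices C S P) {k : ℤ} (hk : k ∉ S) :
    P k = 0 := by
  simpa [h.sum_eq_one] using h.orthogonalIdempotents.mul_sum_of_notMem hk

theorem IsGradingMatrices.map (h : IsGradingMatrices C S P) (φ : R →+* R') :
    IsGradingMatrices (φ.mapMatrix ∘ C) S (φ.mapMatrix ∘ P) where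
  orthogonalIdempotents := h.orthogonalIdempotents.map _
  sum_eq_one := by simp only [Function.comp_apply, ← map_sum, h.sum_eq_one, map_one]
  mul_adCol_mul i j a := by
    simp only [Function.comp_apply, ← mapMatrix_adCol, ← map_mul, h.mul_adCol_mul]

theorem isGradingMatrices_map_iff {φ : R →+* R'} (hφ : Function.Injective φ) :
    IsGradingMatrices (φ.mapMatrix ∘ C) S (φ.mapMatrix ∘ P) ↔ IsGradingMatrices C S P := by
  have hφ' : Function.Injective φ.mapMatrix := Matrix.map_injective (m := ι) (n := ι) hφ
  refine ⟨fun h => ⟨?_, ?_, fun i j a => ?_⟩, (·.map φ)⟩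
  · exact (OrthogonalIdempotents.map_injective_iff _ hφ').mp h.orthogonalIdempotents
  · exact hφ' (by simpa only [Function.comp_apply, map_sum, map_one] using h.sum_eq_one)
  · exact hφ' (by
      simpa only [Function.comp_apply, map_mul, mapMatrix_adCol] using h.mul_adCol_mul i j a)

theorem HasSpecialGradingMatrices.map (h : HasSpecialGradingMatrices C S) (φ : R →+* R') :
    HasSpecialGradingMatrices (φ.mapMatrix ∘ C) S := by
  obtain ⟨P, hP, B₀, B, hB⟩ := h
  refine ⟨φ.mapMatrix ∘ P, hP.map φ, φ.mapMatrix B₀, φ.mapMatrix ∘ B, ?_⟩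
  simpa only [Function.comp_apply, map_add, map_mul, map_sub, map_one, map_sum] using
    congr_arg φ.mapMatrix hB

end GradingMatrices

section Descent

variable {ι k L : Type*} [Fintype ι] [DecidableEq ι] [CommRing k] [CommRing L] [Algebra k L]

theorem AlgHom.mapMatrix_comp_algebraMap {A B : Type*} [CommRing A] [CommRing B] [Algebra k A]
    [Algebra k B] (φ : A →ₐ[k] B) (c : ι → Matrix ι ι k) :
    (φ : A →+* B).mapMatrix ∘ (algebraMap k A).mapMatrix ∘ c =
      (algebraMap k B).mapMatrix ∘ c := by
  ext; simp

theorem HasSpecialGradingMatrices.exists_finiteType_subalgebra {c : ι → Matrix ι ι k}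
    {S : Finset ℤ} (h : HasSpecialGradingMatrices ((algebraMap k L).mapMatrix ∘ c) S) :
    ∃ A : Subalgebra k L, Algebra.FiniteType k A ∧
      HasSpecialGradingMatrices ((algebraMap k A).mapMatrix ∘ c) S := by
  obtain ⟨P, hP, B₀, B, hB⟩ := h
  let entries : S ⊕ Option ι → Matrix ι ι L := Sum.elim (fun s => P s) fun o => o.elim B₀ B
  let A := Algebra.adjoin k (Set.range fun x : (S ⊕ Option ι) × ι × ι => entries x.1 x.2.1 x.2.2)
  have mem t i j : entries t i j ∈ A := Algebra.subset_adjoin ⟨(t, i, j), rfl⟩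
  have hPA n i j : P n i j ∈ A := by
    by_cases hn : n ∈ S
    · exact mem (.inl ⟨n, hn⟩) i j
    · simp [hP.eq_zero_of_notMem hn, zero_mem]
  let lift (M : Matrix ι ι L) (hM : ∀ i j, M i j ∈ A) : Matrix ι ι A :=
    Matrix.of fun i j => ⟨M i j, hM i j⟩
  have hinj : Function.Injective (RingHom.mapMatrix (m := ι) (A.val : A →+* L)) :=
    Matrix.map_injective Subtype.val_injective
  refine ⟨A, .adjoin_of_finite (Set.finite_range _), fun n => lift (P n) (hPA n), ?_,
    lift B₀ (mem (.inr none)), fun d => lift (B d) (mem (.inr (some d))), hinj ?_⟩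
  · rw [← isGradingMatrices_map_iff (φ := (A.val : A →+* L)) Subtype.val_injective,
      A.val.mapMatrix_comp_algebraMap c]
    exact hP
  · have hc d := congr_fun (A.val.mapMatrix_comp_algebraMap c) d
    simp only [Function.comp_apply] at hc
    simp only [map_add, map_mul, map_sub, map_one, map_sum, Function.comp_apply, hc]
    exact hB

end Descent

theorem HasSpecialGradingMatrices.of_isAlgClosed {ι k L K : Type*} [Fintype ι] [DecidableEq ι]
    [Field k] [CommRing L] [Nontrivial L] [Algebra k L] [Field K] [IsAlgClosed K] [Algebra k K]
    {c : ι → Matrix ι ι k} {S : Finset ℤ}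
    (h : HasSpecialGradingMatrices ((algebraMap k L).mapMatrix ∘ c) S) :
    HasSpecialGradingMatrices ((algebraMap k K).mapMatrix ∘ c) S := by
  obtain ⟨A, hA, hAS⟩ := h.exists_finiteType_subalgebra
  obtain ⟨φ⟩ := Algebra.FiniteType.nonempty_algHom_of_isAlgClosed k A K
  rw [← φ.mapMatrix_comp_algebraMap c]
  exact hAS.map (φ : A →+* K)

open LieModule

section LieGrading

variable {K L : Type*} [CommRing K] [LieRing L] [LieAlgebra K L]

theorem isLieGrading_range_iff {π : ℤ → Module.End K L} (hπ : OrthogonalIdempotents π)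
    {S : Finset ℤ} (hS : ∑ s ∈ S, π s = 1) :
    IsLieGrading K L (fun k => LinearMap.range (π k)) ↔
      ∀ i j x, π (i + j) * toEnd K L L (π i x) * π j = toEnd K L L (π i x) * π j := by
  simp only [IsLieGrading, hπ.isInternal_range hS, true_and]
  refine forall₂_congr fun i j => ⟨fun h x => LinearMap.ext fun y => ?_, ?_⟩
  · have := h _ (LinearMap.mem_range_self _ x) _ (LinearMap.mem_range_self _ y)
    simpa [LinearMap.IsIdempotentElem.mem_range_iff (hπ.idem _)] using this
  · rintro h _ ⟨x, rfl⟩ _ ⟨y, rfl⟩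
    rw [LinearMap.IsIdempotentElem.mem_range_iff (hπ.idem _)]
    simpa using LinearMap.congr_fun (h x) y

theorem mem_center_iff_forall_basis_lie_eq_zero {ι : Type*} (b : Module.Basis ι K L) {x : L} :
    x ∈ LieAlgebra.center K L ↔ ∀ d, ⁅b d, x⁆ = 0 := by
  refine ⟨fun hx d => (mem_maxTrivSubmodule K L L x).mp hx (b d),
    fun h => (mem_maxTrivSubmodule K L L x).mpr fun y => ?_⟩
  have hx : toEnd K L L x = 0 := b.ext fun d => by simp [← lie_skew x, h]
  rw [← lie_skew, neg_eq_zero]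
  simpa using LinearMap.congr_fun hx y

variable {ι : Type*} [Fintype ι] [DecidableEq ι] (b : Module.Basis ι K L)

noncomputable def adMatrix (d : ι) : Matrix ι ι K :=
  LinearMap.toMatrixAlgEquiv b (toEnd K L L (b d))

theorem adCol_adMatrix_toMatrixAlgEquiv (f : Module.End K L) (a : ι) :
    adCol (adMatrix b) (LinearMap.toMatrixAlgEquiv b f) a =
      LinearMap.toMatrixAlgEquiv b (toEnd K L L (f (b a))) := by
  conv_rhs => rw [← b.sum_repr (f (b a))]
  simp only [adCol, adMatrix, map_sum, map_smul, LinearMap.toMatrixAlgEquiv_apply]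

theorem forall_mul_adCol_mul_iff (π π' π'' : Module.End K L) :
    (∀ a, LinearMap.toMatrixAlgEquiv b π' * adCol (adMatrix b) (LinearMap.toMatrixAlgEquiv b π) a *
        LinearMap.toMatrixAlgEquiv b π'' =
      adCol (adMatrix b) (LinearMap.toMatrixAlgEquiv b π) a * LinearMap.toMatrixAlgEquiv b π'') ↔
      ∀ x, π' * toEnd K L L (π x) * π'' = toEnd K L L (π x) * π'' := by
  simp only [adCol_adMatrix_toMatrixAlgEquiv, ← map_mul,
    (LinearMap.toMatrixAlgEquiv b).injective.eq_iff]
  let F : L →ₗ[K] Module.End K L := LinearMap.mulRight K π'' ∘ₗ LinearMap.mulLeft K π' ∘ₗ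
    (toEnd K L L : L →ₗ[K] Module.End K L) ∘ₗ π
  let G : L →ₗ[K] Module.End K L := LinearMap.mulRight K π'' ∘ₗ
    (toEnd K L L : L →ₗ[K] Module.End K L) ∘ₗ π
  exact ⟨fun h x => LinearMap.congr_fun (b.ext (f₁ := F) (f₂ := G) h) x, fun h a => h (b a)⟩

theorem isGradingMatrices_toMatrixAlgEquiv_iff {S : Finset ℤ} {π : ℤ → Module.End K L} :
    IsGradingMatrices (adMatrix b) S (LinearMap.toMatrixAlgEquiv b ∘ π) ↔
      OrthogonalIdempotents π ∧ ∑ s ∈ S, π s = 1 ∧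
        ∀ i j x, π (i + j) * toEnd K L L (π i x) * π j = toEnd K L L (π i x) * π j := by
  let T : Module.End K L →+* Matrix ι ι K := LinearMap.toMatrixAlgEquiv b
  have hT := (LinearMap.toMatrixAlgEquiv b).injective
  refine ⟨fun ⟨horth, hsum, hmul⟩ => ⟨(OrthogonalIdempotents.map_injective_iff T hT).mp horth,
      hT ?_, fun i j => (forall_mul_adCol_mul_iff b _ _ _).mp (hmul i j)⟩,
    fun ⟨horth, hsum, hmul⟩ => ⟨horth.map T, ?_,
      fun i j => (forall_mul_adCol_mul_iff b _ _ _).mpr (hmul i j)⟩⟩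
  · simpa only [Function.comp_apply, map_sum, map_one] using hsum
  · simp only [Function.comp_apply, ← map_sum, hsum, map_one]

theorem IsGradingMatrices.isLieGrading {S : Finset ℤ} {P : ℤ → Matrix ι ι K}
    (h : IsGradingMatrices (adMatrix b) S P) :
    IsLieGrading K L fun k => LinearMap.range (Matrix.toLinAlgEquiv b (P k)) := by
  have hP : P = LinearMap.toMatrixAlgEquiv b ∘ fun k => Matrix.toLinAlgEquiv b (P k) := by
    ext; simp
  rw [hP, isGradingMatrices_toMatrixAlgEquiv_iff] at h
  exact (isLieGrading_range_iff h.1 h.2.1).mpr h.2.2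

end LieGrading

section Field

variable {K L ι : Type*} [Field K] [LieRing L] [LieAlgebra K L] [Fintype ι]
  (b : Module.Basis ι K L)

theorem range_inf_center_eq_bot_iff {π₀ : Module.End K L} (h : IsIdempotentElem π₀) :
    LinearMap.range π₀ ⊓ (LieAlgebra.center K L).toSubmodule = ⊥ ↔
      ∃ (g₀ : Module.End K L) (g : ι → Module.End K L),
        g₀ * (1 - π₀) + ∑ d, g d * toEnd K L L (b d) = 1 := by
  let f (o : Option ι) : Module.End K L := o.elim (1 - π₀) fun d => toEnd K L L (b d)
  calc _ ↔ ∀ x, (∀ o, f o x = 0) → x = 0 := by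
        simp only [Submodule.eq_bot_iff, Submodule.mem_inf, LieSubmodule.mem_toSubmodule,
          LinearMap.IsIdempotentElem.mem_range_iff h, mem_center_iff_forall_basis_lie_eq_zero b,
          Option.forall, f, Option.elim, LinearMap.sub_apply, Module.End.one_apply, sub_eq_zero,
          toEnd_apply_apply, and_imp]
        exact forall_congr' fun x => ⟨fun H hx => H hx.symm, fun H hx => H hx.symm⟩
    _ ↔ ∃ g : Option ι → Module.End K L, ∑ o, g o * f o = 1 :=
        (Module.End.exists_sum_mul_eq_one_iff f).symm
    _ ↔ _ :=
        ⟨fun ⟨g, hg⟩ => ⟨g none, g ∘ some, by simpa [f, Fintype.sum_option] using hg⟩,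
          fun ⟨g₀, g, hg⟩ => ⟨fun o => o.elim g₀ g, by simpa [f, Fintype.sum_option] using hg⟩⟩

variable [DecidableEq ι]

theorem range_toLinAlgEquiv_inf_center_eq_bot_iff {P₀ : Matrix ι ι K} (h : IsIdempotentElem P₀) :
    LinearMap.range (Matrix.toLinAlgEquiv b P₀) ⊓ (LieAlgebra.center K L).toSubmodule = ⊥ ↔
      ∃ (B₀ : Matrix ι ι K) (B : ι → Matrix ι ι K),
        B₀ * (1 - P₀) + ∑ d, B d * adMatrix b d = 1 := by
  let T := LinearMap.toMatrixAlgEquiv b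
  rw [range_inf_center_eq_bot_iff b (h.map (Matrix.toLinAlgEquiv b))]
  refine ⟨fun ⟨g₀, g, hg⟩ => ⟨T g₀, T ∘ g, ?_⟩,
    fun ⟨B₀, B, hB⟩ => ⟨Matrix.toLinAlgEquiv b B₀, Matrix.toLinAlgEquiv b ∘ B, T.injective ?_⟩⟩
  · simpa [T, adMatrix] using congr_arg T hg
  · simpa [T, adMatrix] using hB

theorem IsLieGrading.exists_isGradingMatrices {p : ℤ → Submodule K L} (hp : IsLieGrading K L p) :
    ∃ S P, IsGradingMatrices (adMatrix b) S P ∧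
      (∀ k, LinearMap.range (Matrix.toLinAlgEquiv b (P k)) = p k) ∧
      ∀ k ∈ S, p k ≠ ⊥ := by
  have := Module.Finite.of_basis b
  have hfin : {k | p k ≠ ⊥}.Finite := by
    have := hp.1.submodule_iSupIndep.fintypeNeBotOfFiniteDimensional
    exact Set.finite_coe_iff.mp (Finite.of_fintype {k // p k ≠ ⊥})
  obtain ⟨π, horth, hrange, hsum⟩ :=
    hp.1.exists_orthogonalIdempotents (S := hfin.toFinset) (by simp)
  refine ⟨hfin.toFinset, LinearMap.toMatrixAlgEquiv b ∘ π,
    (isGradingMatrices_toMatrixAlgEquiv_iff b).mpr ⟨horth, hsum, ?_⟩, by simpa using hrange,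
    by simp⟩
  rw [← isLieGrading_range_iff horth hsum]
  simpa only [hrange] using hp

theorem hasSpecialGrading_iff_exists_hasSpecialGradingMatrices :
    HasSpecialGrading K L ↔ ∃ S, HasSpecialGradingMatrices (adMatrix b) S := by
  constructor
  · rintro ⟨p, hp, hz⟩
    obtain ⟨S, P, hP, hrange, -⟩ := hp.exists_isGradingMatrices b
    rw [← hrange 0,
      range_toLinAlgEquiv_inf_center_eq_bot_iff b (hP.orthogonalIdempotents.idem 0)] at hz
    exact ⟨S, P, hP, hz⟩
  · rintro ⟨S, P, hP, hB⟩
    exact ⟨_, hP.isLieGrading b,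
      (range_toLinAlgEquiv_inf_center_eq_bot_iff b (hP.orthogonalIdempotents.idem 0)).mpr hB⟩

theorem hasVerySpecialGrading_iff_exists_hasSpecialGradingMatrices :
    HasVerySpecialGrading K L ↔ ∃ S, 0 ∉ S ∧ HasSpecialGradingMatrices (adMatrix b) S := by
  constructor
  · rintro ⟨p, hp, h0⟩
    obtain ⟨S, P, hP, hrange, hS⟩ := hp.exists_isGradingMatrices b
    refine ⟨S, fun h => hS 0 h h0, P, hP,
      (range_toLinAlgEquiv_inf_center_eq_bot_iff b (hP.orthogonalIdempotents.idem 0)).mp ?_⟩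
    rw [hrange 0, h0, bot_inf_eq]
  · rintro ⟨S, h0, P, hP, -⟩
    exact ⟨_, hP.isLieGrading b, by rw [hP.eq_zero_of_notMem h0, map_zero, LinearMap.range_zero]⟩

end Field

theorem adMatrix_basis_tensorProduct {k 𝔫 ι : Type*} [CommRing k] [LieRing 𝔫] [LieAlgebra k 𝔫]
    [Fintype ι] [DecidableEq ι] (e : Module.Basis ι k 𝔫) (K : Type*) [CommRing K] [Algebra k K] :
    adMatrix (Algebra.TensorProduct.basis K e) = (algebraMap k K).mapMatrix ∘ adMatrix e := by
  funext d
  ext i j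
  simp [adMatrix, LinearMap.toMatrixAlgEquiv_apply, Algebra.TensorProduct.basis_apply,
    toEnd_baseChange]

/-- For a finite-dimensional Lie algebra `𝔫` over `ℚ`:
(i) `ℂ ⊗ 𝔫` admits a special grading iff `ℚ̄ ⊗ 𝔫` does; and
(ii) `ℂ ⊗ 𝔫` admits a very special grading iff `ℚ̄ ⊗ 𝔫` does. -/
theorem hasSpecialGrading_complex_iff_algebraicClosure
    {𝔫 : Type*} [LieRing 𝔫] [LieAlgebra ℚ 𝔫] [FiniteDimensional ℚ 𝔫] :
    (HasSpecialGrading ℂ (ℂ ⊗[ℚ] 𝔫) ↔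
      HasSpecialGrading (AlgebraicClosure ℚ) ((AlgebraicClosure ℚ) ⊗[ℚ] 𝔫)) ∧
    (HasVerySpecialGrading ℂ (ℂ ⊗[ℚ] 𝔫) ↔
      HasVerySpecialGrading (AlgebraicClosure ℚ) ((AlgebraicClosure ℚ) ⊗[ℚ] 𝔫)) := by
  let e := Module.finBasis ℚ 𝔫
  let eℂ := Algebra.TensorProduct.basis ℂ e
  let eQ := Algebra.TensorProduct.basis (AlgebraicClosure ℚ) e
  rw [hasSpecialGrading_iff_exists_hasSpecialGradingMatrices eℂ,
    hasSpecialGrading_iff_exists_hasSpecialGradingMatrices eQ,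
    hasVerySpecialGrading_iff_exists_hasSpecialGradingMatrices eℂ,
    hasVerySpecialGrading_iff_exists_hasSpecialGradingMatrices eQ,
    adMatrix_basis_tensorProduct, adMatrix_basis_tensorProduct]
  have key S : HasSpecialGradingMatrices ((algebraMap ℚ ℂ).mapMatrix ∘ adMatrix e) S ↔
      HasSpecialGradingMatrices ((algebraMap ℚ (AlgebraicClosure ℚ)).mapMatrix ∘ adMatrix e) S :=
    ⟨.of_isAlgClosed, .of_isAlgClosed⟩
  exact ⟨exists_congr key, exists_congr fun S => and_congr_right' (key S)⟩
end

section
/- Let V be a finite-dimensional vector space over ℚ, let h ∈ GL(V), let A be a subring of End(V) all of whose elements commute with h, and let A[h] be the subring of End(V) generated by A and h. Let 0 = V_0 ⊆ V_1 ⊆ ⋯ ⊆ V_n = V be a filtration of V by A[h]-submodules, and for 1 ≤ i ≤ n let h_i be the automorphism induced by h on V_i/V_{i-1}. Then ht_A(h) ≥ ∏_{1 ≤ i ≤ n} ht_A(h_i). Moreover, if V is isomorphic to ⊕_{1 ≤ i ≤ n} V_i/V_{i-1} as an A[h]-module, then ht_A(h) = ∏_{1 ≤ i ≤ n} ht_A(h_i).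 -/
/-- A lattice in a `ℚ`-vector space `V`: a finitely generated additive subgroup
spanning `V` over `ℚ`. -/
def IsLatticeIn {V : Type*} [AddCommGroup V] [Module ℚ V] (Λ : AddSubgroup V) : Prop :=
  Λ.FG ∧ Submodule.span ℚ (Λ : Set V) = ⊤

/-- The `A`-height `ht_A(h)` (in `ℕ∞`, with `⊤` when no admissible pair exists): the
minimum of the indices `[Λ : E]` over all pairs of `A`-stable lattices `(Λ, E)` with
`E ⊆ Λ` and `h(E) ⊆ Λ`. -/
noncomputable def latHeightA {V : Type*} [AddCommGroup V] [Module ℚ V]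
    (A : Subring (Module.End ℚ V)) (h : Module.End ℚ V) : ℕ∞ :=
  sInf {n : ℕ∞ | ∃ Λ E : AddSubgroup V, IsLatticeIn Λ ∧ IsLatticeIn E ∧ E ≤ Λ ∧
    (∀ x ∈ E, h x ∈ Λ) ∧
    (∀ a ∈ A, ∀ x ∈ Λ, a x ∈ Λ) ∧ (∀ a ∈ A, ∀ x ∈ E, a x ∈ E) ∧
    n = (E.relIndex Λ : ℕ∞)}

/-- The endomorphism induced on the subquotient `q / p` (realized as
`q ⧸ (p.comap q.subtype)`) by an endomorphism `g` preserving `p` and `q`. -/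
noncomputable def inducedEnd {V : Type*} [AddCommGroup V] [Module ℚ V]
    (p q : Submodule ℚ V) (g : Module.End ℚ V)
    (hq : ∀ x ∈ q, g x ∈ q) (hp : ∀ x ∈ p, g x ∈ p) :
    Module.End ℚ ((↥q) ⧸ (p.comap q.subtype)) :=
  Submodule.mapQ (p.comap q.subtype) (p.comap q.subtype) (g.restrict hq)
    (by
      intro x hx
      simp only [Submodule.mem_comap, Submodule.coe_subtype] at hx ⊢
      simpa only [LinearMap.restrict_coe_apply] using hp _ hx)

/-!
Let `(Λ, E)` be a pair of `A`-stable lattices with `E ⊆ Λ` and `h(E) ⊆ Λ`. On each subquotient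
`V_i/V_{i-1}` the images of `Λ ∩ V_i` and `E ∩ V_i` form such a pair for `h_i` and the induced
action of `A`, and `[Λ : E]` is the product of their indices: along `0 → V_{i-1} → V_i → V_i/V_{i-1}`
the index of `E ∩ V_i` in `Λ ∩ V_i` is the index one step down times the index of the images.
Hence `[Λ : E] ≥ ∏ ht_A(h_i)`. When `V ≅ ⊕ V_i/V_{i-1}` equivariantly, optimal pairs on the
summands assemble to a product pair on `V` whose index is the product of theirs.
-/
namespace AddSubgroup

lemma relIndex_eq_relIndex_inf_ker_mul_relIndex_map {G Q : Type*} [AddCommGroup G] [AddGroup Q]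
    (π : G →+ Q) {E Λ : AddSubgroup G} (hle : E ≤ Λ) :
    E.relIndex Λ = (E ⊓ π.ker).relIndex (Λ ⊓ π.ker) * (E.map π).relIndex (Λ.map π) := by
  -- split along `E ≤ E ⊔ Λ ⊓ π.ker ≤ Λ`; the modular law moves the upper step into the image
  have hlower : E.relIndex (E ⊔ Λ ⊓ π.ker) = (E ⊓ π.ker).relIndex (Λ ⊓ π.ker) := by
    rw [relIndex_sup_left, ← inf_relIndex_right, ← inf_assoc, inf_eq_left.mpr hle]
  have hupper : (E ⊔ Λ ⊓ π.ker).relIndex Λ = (E.map π).relIndex (Λ.map π) := by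
    rw [inf_comm, ← sup_inf_assoc_of_le _ hle, inf_relIndex_right, ← comap_map_eq,
      relIndex_comap]
  rw [← hlower, ← hupper, relIndex_mul_relIndex _ _ _ le_sup_left (sup_le hle inf_le_left)]

lemma card_pi {ι : Type*} [Fintype ι] {G : ι → Type*} [∀ i, AddGroup (G i)]
    (H : ∀ i, AddSubgroup (G i)) :
    Nat.card (pi Set.univ H) = ∏ i, Nat.card (H i) := by
  rw [← Nat.card_pi]
  exact Nat.card_congr ((Equiv.subtypeEquivRight fun x => by simp [mem_pi]).trans
    Equiv.subtypePiEquivPi)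

lemma relIndex_pi {ι : Type*} [Fintype ι] {G : ι → Type*} [∀ i, AddCommGroup (G i)]
    (E Λ : ∀ i, AddSubgroup (G i)) :
    (pi Set.univ E).relIndex (pi Set.univ Λ) = ∏ i, (E i).relIndex (Λ i) := by
  let π := AddMonoidHom.piMap fun i => QuotientAddGroup.mk' (E i)
  have hker : π.ker = pi Set.univ E := by
    ext x
    simp [π, mem_pi, funext_iff]
  have hmap : (pi Set.univ Λ).map π =
      pi Set.univ fun i => (Λ i).map (QuotientAddGroup.mk' (E i)) := by
    ext y
    simp only [mem_map, mem_pi, Set.mem_univ, true_implies]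
    constructor
    · rintro ⟨x, hx, rfl⟩ i
      exact ⟨x i, hx i, rfl⟩
    · intro hy
      choose x hx hxy using hy
      exact ⟨x, hx, funext hxy⟩
  rw [← hker, relIndex_ker, hmap, card_pi]
  simp_rw [← relIndex_ker, QuotientAddGroup.ker_mk']

section FG

variable {M N : Type*} [AddCommGroup M] [AddCommGroup N]

lemma fg_iff_toIntSubmodule_fg {H : AddSubgroup M} : H.FG ↔ (toIntSubmodule H).FG := by
  rw [Submodule.fg_iff_addSubgroup_fg, toIntSubmodule_toAddSubgroup]

lemma FG.map {H : AddSubgroup M} (hH : H.FG) (f : M →+ N) : (H.map f).FG := by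
  rw [fg_iff_toIntSubmodule_fg] at hH ⊢
  exact hH.map f.toIntLinearMap

lemma FG.comap_of_injective {H : AddSubgroup N} (hH : H.FG) {f : M →+ N}
    (hf : Function.Injective f) : (H.comap f).FG := by
  rw [fg_iff_toIntSubmodule_fg] at hH ⊢
  rw [← Submodule.AddMonoidHom.coe_toIntLinearMap_comap]
  exact Submodule.fg_of_fg_map_injective f.toIntLinearMap hf
    (hH.of_le (Submodule.map_comap_le _ _))

end FG

lemma span_rat_eq_top_iff {M : Type*} [AddCommGroup M] [Module ℚ M] (Λ : AddSubgroup M) :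
    Submodule.span ℚ (Λ : Set M) = ⊤ ↔ ∀ x : M, ∃ m : ℕ, 0 < m ∧ m • x ∈ Λ := by
  constructor
  · intro hs x
    have hx : x ∈ Submodule.span ℚ (Λ : Set M) := hs ▸ Submodule.mem_top
    induction hx using Submodule.span_induction with
    | mem x hx => exact ⟨1, one_pos, by rwa [one_smul]⟩
    | zero => exact ⟨1, one_pos, by rw [smul_zero]; exact Λ.zero_mem⟩
    | add x y _ _ hx hy =>
      obtain ⟨m, hm, hmx⟩ := hx
      obtain ⟨k, hk, hky⟩ := hy
      refine ⟨k * m, Nat.mul_pos hk hm, ?_⟩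
      rw [smul_add, mul_smul, mul_comm, mul_smul]
      exact Λ.add_mem (Λ.nsmul_mem hmx k) (Λ.nsmul_mem hky m)
    | smul q x _ hx =>
      obtain ⟨m, hm, hmx⟩ := hx
      refine ⟨q.den * m, Nat.mul_pos q.den_pos hm, ?_⟩
      have hq : (q.den * m : ℕ) • q • x = q.num • m • x := by
        rw [← Nat.cast_smul_eq_nsmul ℚ, ← Nat.cast_smul_eq_nsmul ℚ m, ← Int.cast_smul_eq_zsmul ℚ,
          smul_smul, smul_smul, Nat.cast_mul, mul_right_comm, Rat.den_mul_eq_num]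
      rw [hq]
      exact Λ.zsmul_mem hmx _
  · intro h
    refine Submodule.eq_top_iff'.mpr fun x => ?_
    obtain ⟨m, hm, hmx⟩ := h x
    have hspan := Submodule.smul_mem _ ((m : ℚ)⁻¹) (Submodule.subset_span hmx)
    rwa [← Nat.cast_smul_eq_nsmul ℚ, inv_smul_smul₀ (by positivity)] at hspan

end AddSubgroup

lemma isLatticeIn_iff {M : Type*} [AddCommGroup M] [Module ℚ M] (Λ : AddSubgroup M) :
    IsLatticeIn Λ ↔ Λ.FG ∧ ∀ x : M, ∃ m : ℕ, 0 < m ∧ m • x ∈ Λ := by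
  rw [IsLatticeIn, AddSubgroup.span_rat_eq_top_iff]

namespace IsLatticeIn

variable {M N : Type*} [AddCommGroup M] [Module ℚ M] [AddCommGroup N] [Module ℚ N]
  {Λ E : AddSubgroup M}

lemma map (hΛ : IsLatticeIn Λ) {f : M →ₗ[ℚ] N} (hf : Function.Surjective f) :
    IsLatticeIn (Λ.map f.toAddMonoidHom) := by
  rw [isLatticeIn_iff] at hΛ ⊢
  refine ⟨hΛ.1.map _, fun y => ?_⟩
  obtain ⟨x, rfl⟩ := hf y
  obtain ⟨m, hm, hmx⟩ := hΛ.2 x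
  exact ⟨m, hm, m • x, hmx, map_nsmul f m x⟩

lemma comap (hΛ : IsLatticeIn Λ) {f : N →ₗ[ℚ] M} (hf : Function.Injective f) :
    IsLatticeIn (Λ.comap f.toAddMonoidHom) := by
  rw [isLatticeIn_iff] at hΛ ⊢
  refine ⟨hΛ.1.comap_of_injective hf, fun y => ?_⟩
  obtain ⟨m, hm, hmy⟩ := hΛ.2 (f y)
  exact ⟨m, hm, by simpa [map_nsmul] using hmy⟩

lemma pi {ι : Type*} [Fintype ι] {Q : ι → Type*} [∀ i, AddCommGroup (Q i)]
    [∀ i, Module ℚ (Q i)] {Λ : ∀ i, AddSubgroup (Q i)} (hΛ : ∀ i, IsLatticeIn (Λ i)) :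
    IsLatticeIn (AddSubgroup.pi Set.univ Λ) := by
  simp_rw [isLatticeIn_iff] at hΛ ⊢
  refine ⟨AddSubgroup.FG.pi fun i => (hΛ i).1, fun x => ?_⟩
  choose m hm hmx using fun i => (hΛ i).2 (x i)
  refine ⟨∏ i, m i, Finset.prod_pos fun i _ => hm i, fun i _ => ?_⟩
  obtain ⟨t, ht⟩ := Finset.dvd_prod_of_mem m (Finset.mem_univ i)
  rw [Pi.smul_apply, ht, mul_comm, mul_smul]
  exact AddSubgroup.nsmul_mem _ (hmx i) t

lemma relIndex_ne_zero (hE : IsLatticeIn E) (hΛ : Λ.FG) : E.relIndex Λ ≠ 0 := by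
  have : AddGroup.FG Λ := (AddGroup.fg_iff_addSubgroup_fg Λ).mpr hΛ
  have : AddGroup.FG (Λ ⧸ E.addSubgroupOf Λ) :=
    AddGroup.fg_of_surjective (QuotientAddGroup.mk'_surjective _)
  have : Finite (Λ ⧸ E.addSubgroupOf Λ) := by
    refine AddCommGroup.finite_of_fg_isAddTorsion _ fun q => ?_
    induction q using QuotientAddGroup.induction_on with | H y =>
    obtain ⟨m, hm, hmy⟩ := ((isLatticeIn_iff E).mp hE).2 y
    refine isOfFinAddOrder_iff_nsmul_eq_zero.mpr ⟨m, hm, ?_⟩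
    rw [← QuotientAddGroup.mk_nsmul, QuotientAddGroup.eq_zero_iff, AddSubgroup.mem_addSubgroupOf]
    exact hmy
  exact AddSubgroup.index_ne_zero_of_finite

end IsLatticeIn

section Height

variable {V : Type*} [AddCommGroup V] [Module ℚ V]

structure IsHeightPair (A : Subring (Module.End ℚ V)) (h : Module.End ℚ V)
    (Λ E : AddSubgroup V) : Prop where
  lattice : IsLatticeIn Λ
  sublattice : IsLatticeIn E
  le : E ≤ Λ
  mapsTo : ∀ x ∈ E, h x ∈ Λ
  stable : ∀ a ∈ A, ∀ x ∈ Λ, a x ∈ Λ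
  sublattice_stable : ∀ a ∈ A, ∀ x ∈ E, a x ∈ E

variable {A : Subring (Module.End ℚ V)} {h : Module.End ℚ V}

lemma latHeightA_le_relIndex {Λ E : AddSubgroup V} (hp : IsHeightPair A h Λ E) :
    latHeightA A h ≤ E.relIndex Λ :=
  sInf_le ⟨Λ, E, hp.1, hp.2, hp.3, hp.4, hp.5, hp.6, rfl⟩

lemma le_latHeightA {b : ℕ∞}
    (hb : ∀ Λ E : AddSubgroup V, IsHeightPair A h Λ E → b ≤ E.relIndex Λ) :
    b ≤ latHeightA A h :=
  le_sInf <| by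
    rintro _ ⟨Λ, E, h₁, h₂, h₃, h₄, h₅, h₆, rfl⟩
    exact hb Λ E ⟨h₁, h₂, h₃, h₄, h₅, h₆⟩

lemma latHeightA_ne_zero : latHeightA A h ≠ 0 := by
  refine Order.one_le_iff_ne_zero.mp (le_latHeightA fun Λ E hp => ?_)
  exact_mod_cast Nat.one_le_iff_ne_zero.mpr (hp.sublattice.relIndex_ne_zero hp.lattice.1)

lemma exists_isHeightPair_relIndex_eq (hne : latHeightA A h ≠ ⊤) :
    ∃ Λ E : AddSubgroup V, IsHeightPair A h Λ E ∧ (E.relIndex Λ : ℕ∞) = latHeightA A h := by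
  obtain ⟨n, hn, -⟩ := sInf_lt_iff.mp (lt_top_iff_ne_top.mpr hne)
  obtain ⟨Λ, E, h₁, h₂, h₃, h₄, h₅, h₆, heq⟩ := csInf_mem ⟨n, hn⟩
  exact ⟨Λ, E, ⟨h₁, h₂, h₃, h₄, h₅, h₆⟩, heq.symm⟩

end Height

lemma mapsTo_of_mem_subring_closure {R M : Type*} [Semiring R] [AddCommGroup M] [Module R M]
    {S : Set (Module.End R M)} {X : AddSubgroup M} (hS : ∀ T ∈ S, ∀ x ∈ X, T x ∈ X)
    {T : Module.End R M} (hT : T ∈ Subring.closure S) : ∀ x ∈ X, T x ∈ X := by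
  induction hT using Subring.closure_induction with
  | mem T hT => exact hS T hT
  | zero => exact fun _ _ => X.zero_mem
  | one => exact fun _ hx => hx
  | add T₁ T₂ _ _ ih₁ ih₂ => exact fun x hx => X.add_mem (ih₁ x hx) (ih₂ x hx)
  | neg T _ ih => exact fun x hx => X.neg_mem (ih x hx)
  | mul T₁ T₂ _ _ ih₁ ih₂ => exact fun x hx => ih₁ _ (ih₂ x hx)

section Subquotient

variable {V : Type*} [AddCommGroup V] [Module ℚ V] (P W : Submodule ℚ V)

def AddSubgroup.subquotient (Λ : AddSubgroup V) : AddSubgroup (W ⧸ P.comap W.subtype) :=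
  (Λ.comap W.subtype.toAddMonoidHom).map (P.comap W.subtype).mkQ.toAddMonoidHom

lemma IsLatticeIn.subquotient {Λ : AddSubgroup V} (hΛ : IsLatticeIn Λ) :
    IsLatticeIn (Λ.subquotient P W) :=
  (hΛ.comap W.injective_subtype).map (P.comap W.subtype).mkQ_surjective

lemma inducedEnd_mapsTo_subquotient {g : Module.End ℚ V} (hgW : ∀ x ∈ W, g x ∈ W)
    (hgP : ∀ x ∈ P, g x ∈ P) {Λ E : AddSubgroup V} (hg : ∀ x ∈ E, g x ∈ Λ) :
    ∀ y ∈ E.subquotient P W, inducedEnd P W g hgW hgP y ∈ Λ.subquotient P W := by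
  rintro _ ⟨x, hx, rfl⟩
  exact ⟨g.restrict hgW x, hg _ hx, rfl⟩

lemma IsHeightPair.subquotient {A : Subring (Module.End ℚ V)} {h : Module.End ℚ V}
    {Λ E : AddSubgroup V} (hp : IsHeightPair A h Λ E)
    (hhW : ∀ x ∈ W, h x ∈ W) (hhP : ∀ x ∈ P, h x ∈ P)
    (hAW : ∀ a ∈ A, ∀ x ∈ W, a x ∈ W) (hAP : ∀ a ∈ A, ∀ x ∈ P, a x ∈ P) :
    IsHeightPair
      (Subring.closure {T | ∃ a, ∃ ha : a ∈ A, T = inducedEnd P W a (hAW a ha) (hAP a ha)})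
      (inducedEnd P W h hhW hhP) (Λ.subquotient P W) (E.subquotient P W) where
  lattice := hp.lattice.subquotient P W
  sublattice := hp.sublattice.subquotient P W
  le := AddSubgroup.map_mono (AddSubgroup.comap_mono hp.le)
  mapsTo := inducedEnd_mapsTo_subquotient P W hhW hhP hp.mapsTo
  stable _ hT := mapsTo_of_mem_subring_closure (by
    rintro _ ⟨a, ha, rfl⟩
    exact inducedEnd_mapsTo_subquotient P W _ _ (hp.stable a ha)) hT
  sublattice_stable _ hT := mapsTo_of_mem_subring_closure (by
    rintro _ ⟨a, ha, rfl⟩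
    exact inducedEnd_mapsTo_subquotient P W _ _ (hp.sublattice_stable a ha)) hT

lemma relIndex_comap_subtype (X Y : AddSubgroup V) :
    (Y.comap W.subtype.toAddMonoidHom).relIndex (X.comap W.subtype.toAddMonoidHom) =
      (Y ⊓ W.toAddSubgroup).relIndex (X ⊓ W.toAddSubgroup) := by
  have hrange : W.subtype.toAddMonoidHom.range = W.toAddSubgroup := by
    ext; simp
  rw [AddSubgroup.relIndex_comap, AddSubgroup.map_comap_eq, hrange, inf_comm W.toAddSubgroup,
    ← AddSubgroup.inf_relIndex_right Y, ← AddSubgroup.inf_relIndex_right (Y ⊓ W.toAddSubgroup),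
    inf_assoc, inf_of_le_right inf_le_right]

variable {P W} in
lemma relIndex_inf_eq_mul_relIndex_subquotient (hPW : P ≤ W) {Λ E : AddSubgroup V}
    (hle : E ≤ Λ) :
    (E ⊓ W.toAddSubgroup).relIndex (Λ ⊓ W.toAddSubgroup) =
      (E ⊓ P.toAddSubgroup).relIndex (Λ ⊓ P.toAddSubgroup) *
        (E.subquotient P W).relIndex (Λ.subquotient P W) := by
  have hker : AddMonoidHom.ker (P.comap W.subtype).mkQ.toAddMonoidHom =
      AddSubgroup.comap W.subtype.toAddMonoidHom P.toAddSubgroup := by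
    ext; simp
  rw [← relIndex_comap_subtype W, AddSubgroup.relIndex_eq_relIndex_inf_ker_mul_relIndex_map
    (P.comap W.subtype).mkQ.toAddMonoidHom (AddSubgroup.comap_mono hle), hker,
    ← AddSubgroup.comap_inf, ← AddSubgroup.comap_inf, relIndex_comap_subtype, inf_assoc,
    inf_assoc, inf_eq_left.mpr (Submodule.toAddSubgroup_mono hPW)]
  rfl

lemma relIndex_inf_eq_prod_relIndex_subquotient {n : ℕ} (Vf : Fin (n + 1) → Submodule ℚ V)
    (hV0 : Vf 0 = ⊥) (hmono : Monotone Vf) {Λ E : AddSubgroup V} (hle : E ≤ Λ) :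
    (E ⊓ (Vf (Fin.last n)).toAddSubgroup).relIndex (Λ ⊓ (Vf (Fin.last n)).toAddSubgroup) =
      ∏ i : Fin n, (E.subquotient (Vf i.castSucc) (Vf i.succ)).relIndex
        (Λ.subquotient (Vf i.castSucc) (Vf i.succ)) := by
  induction n with
  | zero =>
    rw [Fin.last_zero, hV0, Submodule.bot_toAddSubgroup, inf_bot_eq, inf_bot_eq,
      AddSubgroup.relIndex_self, Fin.prod_univ_zero]
  | succ n ih =>
    rw [Fin.prod_univ_castSucc, ← Fin.succ_last,
      relIndex_inf_eq_mul_relIndex_subquotient (hmono (Fin.castSucc_le_succ _)) hle]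
    congr 1
    simp_rw [Fin.succ_castSucc]
    exact ih (Vf ∘ Fin.castSucc) hV0 (hmono.comp Fin.strictMono_castSucc.monotone)

end Subquotient

section Pi

variable {V : Type*} [AddCommGroup V] [Module ℚ V] {ι : Type*} [Fintype ι] {Q : ι → Type*}
  [∀ i, AddCommGroup (Q i)] [∀ i, Module ℚ (Q i)]

lemma IsHeightPair.comap_pi {A : Subring (Module.End ℚ V)} {h : Module.End ℚ V}
    {B : ∀ i, Subring (Module.End ℚ (Q i))} {g : ∀ i, Module.End ℚ (Q i)}
    (e : V ≃ₗ[ℚ] Π i, Q i) (heh : ∀ x i, e (h x) i = g i (e x i))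
    (heA : ∀ a ∈ A, ∀ i, ∃ b ∈ B i, ∀ x, e (a x) i = b (e x i))
    {Λ E : ∀ i, AddSubgroup (Q i)} (hp : ∀ i, IsHeightPair (B i) (g i) (Λ i) (E i)) :
    IsHeightPair A h ((AddSubgroup.pi Set.univ Λ).comap e.toLinearMap.toAddMonoidHom)
      ((AddSubgroup.pi Set.univ E).comap e.toLinearMap.toAddMonoidHom) where
  lattice := (IsLatticeIn.pi fun i => (hp i).lattice).comap e.injective
  sublattice := (IsLatticeIn.pi fun i => (hp i).sublattice).comap e.injective
  le := AddSubgroup.comap_mono fun x hx i hi => (hp i).le (hx i hi)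
  mapsTo x hx i _ := by
    show e (h x) i ∈ Λ i
    rw [heh]
    exact (hp i).mapsTo _ (hx i trivial)
  stable a ha x hx i _ := by
    obtain ⟨b, hb, hab⟩ := heA a ha i
    show e (a x) i ∈ Λ i
    rw [hab]
    exact (hp i).stable b hb _ (hx i trivial)
  sublattice_stable a ha x hx i _ := by
    obtain ⟨b, hb, hab⟩ := heA a ha i
    show e (a x) i ∈ E i
    rw [hab]
    exact (hp i).sublattice_stable b hb _ (hx i trivial)

lemma latHeightA_le_prod_of_linearEquiv_pi {A : Subring (Module.End ℚ V)} {h : Module.End ℚ V}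
    {B : ∀ i, Subring (Module.End ℚ (Q i))} {g : ∀ i, Module.End ℚ (Q i)}
    (e : V ≃ₗ[ℚ] Π i, Q i) (heh : ∀ x i, e (h x) i = g i (e x i))
    (heA : ∀ a ∈ A, ∀ i, ∃ b ∈ B i, ∀ x, e (a x) i = b (e x i)) :
    latHeightA A h ≤ ∏ i, latHeightA (B i) (g i) := by
  -- heights are never `0`, which matters because `⊤ * 0 = 0` in `ℕ∞`
  by_cases htop : ∃ i, latHeightA (B i) (g i) = ⊤
  · obtain ⟨i, hi⟩ := htop
    exact le_top.trans_eq
      (WithTop.prod_eq_top (Finset.mem_univ i) hi fun _ _ => latHeightA_ne_zero).symm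
  push Not at htop
  choose Λ E hp hrel using fun i => exists_isHeightPair_relIndex_eq (htop i)
  calc latHeightA A h
      ≤ ((AddSubgroup.pi Set.univ E).comap e.toLinearMap.toAddMonoidHom).relIndex
          ((AddSubgroup.pi Set.univ Λ).comap e.toLinearMap.toAddMonoidHom) :=
        latHeightA_le_relIndex (IsHeightPair.comap_pi e heh heA hp)
    _ = ∏ i, latHeightA (B i) (g i) := by
        rw [AddSubgroup.relIndex_comap, AddSubgroup.map_comap_eq_self_of_surjective e.surjective,
          AddSubgroup.relIndex_pi, Nat.cast_prod]
        exact Finset.prod_congr rfl fun i _ => hrel i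

end Pi

lemma prod_latHeightA_subquotient_le {V : Type*} [AddCommGroup V] [Module ℚ V]
    (h : Module.End ℚ V) (A : Subring (Module.End ℚ V)) (n : ℕ)
    (Vf : Fin (n + 1) → Submodule ℚ V) (hV0 : Vf 0 = ⊥) (hVtop : Vf (Fin.last n) = ⊤)
    (hmono : Monotone Vf) (hstabh : ∀ i, ∀ x ∈ Vf i, h x ∈ Vf i)
    (hstabA : ∀ a ∈ A, ∀ i, ∀ x ∈ Vf i, a x ∈ Vf i) :
    ∏ i : Fin n,
        latHeightA
          (Subring.closure {T | ∃ a, ∃ ha : a ∈ A,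
            T = inducedEnd (Vf i.castSucc) (Vf i.succ) a
                  (hstabA a ha i.succ) (hstabA a ha i.castSucc)})
          (inducedEnd (Vf i.castSucc) (Vf i.succ) h (hstabh i.succ) (hstabh i.castSucc)) ≤
      latHeightA A h := by
  refine le_latHeightA fun Λ E hp => ?_
  calc _ ≤ ∏ i : Fin n, ((E.subquotient (Vf i.castSucc) (Vf i.succ)).relIndex
          (Λ.subquotient (Vf i.castSucc) (Vf i.succ)) : ℕ∞) :=
        Finset.prod_le_prod' fun i _ => latHeightA_le_relIndex (hp.subquotient _ _ _ _
          (fun a ha => hstabA a ha i.succ) (fun a ha => hstabA a ha i.castSucc))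
    _ = E.relIndex Λ := by
        rw [← Nat.cast_prod, ← relIndex_inf_eq_prod_relIndex_subquotient Vf hV0 hmono hp.le,
          hVtop, Submodule.top_toAddSubgroup, inf_top_eq, inf_top_eq]

theorem latHeightA_ge_prod_quotients_general
    {V : Type*} [AddCommGroup V] [Module ℚ V]
    (h : V ≃ₗ[ℚ] V) (A : Subring (Module.End ℚ V))
    (n : ℕ) (Vf : Fin (n + 1) → Submodule ℚ V)
    (hV0 : Vf 0 = ⊥) (hVtop : Vf (Fin.last n) = ⊤) (hmono : Monotone Vf)
    (hstabh : ∀ i, ∀ x ∈ Vf i, h x ∈ Vf i)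
    (hstabA : ∀ a, a ∈ A → ∀ i, ∀ x ∈ Vf i, a x ∈ Vf i) :
    (latHeightA A (h : Module.End ℚ V) ≥
      ∏ i : Fin n,
        latHeightA
          (Subring.closure {T | ∃ a, ∃ ha : a ∈ A,
            T = inducedEnd (Vf i.castSucc) (Vf i.succ) a
                  (hstabA a ha i.succ) (hstabA a ha i.castSucc)})
          (inducedEnd (Vf i.castSucc) (Vf i.succ) (h : Module.End ℚ V)
            (hstabh i.succ) (hstabh i.castSucc))) ∧
    ((∃ e : V ≃ₗ[ℚ]
          (Π i : Fin n, (↥(Vf i.succ) ⧸ ((Vf i.castSucc).comap (Vf i.succ).subtype))),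
        (∀ x : V, ∀ i : Fin n,
          e (h x) i = inducedEnd (Vf i.castSucc) (Vf i.succ) (h : Module.End ℚ V)
            (hstabh i.succ) (hstabh i.castSucc) (e x i)) ∧
        (∀ a, ∀ ha : a ∈ A, ∀ x : V, ∀ i : Fin n,
          e (a x) i = inducedEnd (Vf i.castSucc) (Vf i.succ) a
            (hstabA a ha i.succ) (hstabA a ha i.castSucc) (e x i))) →
      latHeightA A (h : Module.End ℚ V) =
        ∏ i : Fin n,
          latHeightA
            (Subring.closure {T | ∃ a, ∃ ha : a ∈ A,
              T = inducedEnd (Vf i.castSucc) (Vf i.succ) a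
                    (hstabA a ha i.succ) (hstabA a ha i.castSucc)})
            (inducedEnd (Vf i.castSucc) (Vf i.succ) (h : Module.End ℚ V)
              (hstabh i.succ) (hstabh i.castSucc))) := by
  have hge := prod_latHeightA_subquotient_le (h : Module.End ℚ V) A n Vf hV0 hVtop hmono
    hstabh hstabA
  refine ⟨hge, fun ⟨e, heh, heA⟩ => le_antisymm ?_ hge⟩
  exact latHeightA_le_prod_of_linearEquiv_pi e heh fun a ha i =>
    ⟨_, Subring.subset_closure ⟨a, ha, rfl⟩, fun x => heA a ha x i⟩

/-- Let `h ∈ GL(V)`, let `A` be a subring of `End(V)` commuting with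
`h`, and let `0 = V_0 ⊆ V_1 ⊆ ⋯ ⊆ V_n = V` be a filtration by `A[h]`-submodules (i.e.
submodules stable under `h` and under `A`).  Let `h_i` be the endomorphism induced by
`h` on `V_i/V_{i-1}`, with the induced `A`-action.  Then
`ht_A(h) ≥ ∏ᵢ ht_A(h_i)`, with equality when `V ≅ ⊕ᵢ V_i/V_{i-1}` as `A[h]`-modules. -/
theorem latHeightA_ge_prod_quotients
    {V : Type*} [AddCommGroup V] [Module ℚ V] [FiniteDimensional ℚ V]
    (h : V ≃ₗ[ℚ] V) (A : Subring (Module.End ℚ V))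
    (hA : ∀ a ∈ A, a * (h : Module.End ℚ V) = (h : Module.End ℚ V) * a)
    (n : ℕ) (Vf : Fin (n + 1) → Submodule ℚ V)
    (hV0 : Vf 0 = ⊥) (hVtop : Vf (Fin.last n) = ⊤) (hmono : Monotone Vf)
    (hstabh : ∀ i, ∀ x ∈ Vf i, h x ∈ Vf i)
    (hstabA : ∀ a, a ∈ A → ∀ i, ∀ x ∈ Vf i, a x ∈ Vf i) :
    (latHeightA A (h : Module.End ℚ V) ≥
      ∏ i : Fin n,
        latHeightA
          (Subring.closure {T | ∃ a, ∃ ha : a ∈ A,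
            T = inducedEnd (Vf i.castSucc) (Vf i.succ) a
                  (hstabA a ha i.succ) (hstabA a ha i.castSucc)})
          (inducedEnd (Vf i.castSucc) (Vf i.succ) (h : Module.End ℚ V)
            (hstabh i.succ) (hstabh i.castSucc))) ∧
    ((∃ e : V ≃ₗ[ℚ]
          (Π i : Fin n, (↥(Vf i.succ) ⧸ ((Vf i.castSucc).comap (Vf i.succ).subtype))),
        (∀ x : V, ∀ i : Fin n,
          e (h x) i = inducedEnd (Vf i.castSucc) (Vf i.succ) (h : Module.End ℚ V)
            (hstabh i.succ) (hstabh i.castSucc) (e x i)) ∧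
        (∀ a, ∀ ha : a ∈ A, ∀ x : V, ∀ i : Fin n,
          e (a x) i = inducedEnd (Vf i.castSucc) (Vf i.succ) a
            (hstabA a ha i.succ) (hstabA a ha i.castSucc) (e x i))) →
      latHeightA A (h : Module.End ℚ V) =
        ∏ i : Fin n,
          latHeightA
            (Subring.closure {T | ∃ a, ∃ ha : a ∈ A,
              T = inducedEnd (Vf i.castSucc) (Vf i.succ) a
                    (hstabA a ha i.succ) (hstabA a ha i.castSucc)})
            (inducedEnd (Vf i.castSucc) (Vf i.succ) (h : Module.End ℚ V)
              (hstabh i.succ) (hstabh i.castSucc))) :=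
  latHeightA_ge_prod_quotients_general h A n Vf hV0 hVtop hmono hstabh hstabA
end

section
/- Let 𝔫 be a finite-dimensional Lie algebra over ℝ such that the complexification ℂ ⊗_ℝ 𝔫 admits a special grading. Then 𝔫 admits a faithful finite-dimensional module of dimension 1 + dim 𝔫; that is, there exist a real vector space W with dim W = 1 + dim 𝔫 and an injective Lie algebra homomorphism 𝔫 → End(W). -/
open TensorProduct

/-!
The grading of `ℂ ⊗ 𝔫` yields the derivation `D` acting by `k` on the degree-`k` part; its kernel
is the degree-zero part, so `D` is injective on the centre of `ℂ ⊗ 𝔫`. Writing `D = a + i b` on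
`𝔫` with real derivations `a, b`, the pencil `a + s b` of maps from the complexified centre is
injective at `s = i`, hence for all but finitely many `s`, in particular for some real `t`. Then
`δ = a + t b` is a derivation of `𝔫` injective on its centre, and `𝔫` acts faithfully on
`ℝδ ⋉ 𝔫` by the adjoint action: `x` acts trivially exactly when `x` is central and `δ x = 0`.
-/

open Function

namespace IsLieGrading

variable {K 𝔪 : Type*} [CommRing K] [LieRing 𝔪] [LieAlgebra K 𝔪] {p : ℤ → Submodule K 𝔪}

noncomputable def degreeEquiv (hp : IsLieGrading K 𝔪 p) : (DirectSum ℤ fun k => p k) ≃ₗ[K] 𝔪 :=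
  LinearEquiv.ofBijective (DirectSum.coeLinearMap p) hp.1

lemma degreeEquiv_of (hp : IsLieGrading K 𝔪 p) {k : ℤ} (v : p k) :
    hp.degreeEquiv (DirectSum.of (fun k => p k) k v) = v :=
  DirectSum.coeLinearMap_of p k v

noncomputable def degreeMap (hp : IsLieGrading K 𝔪 p) : 𝔪 →ₗ[K] 𝔪 :=
  hp.degreeEquiv.conj (DirectSum.lmap fun k => k • LinearMap.id)

lemma degreeMap_of_mem (hp : IsLieGrading K 𝔪 p) {k : ℤ} {x : 𝔪} (hx : x ∈ p k) :
    hp.degreeMap x = k • x := by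
  have : hp.degreeEquiv.symm x = DirectSum.of (fun k => p k) k ⟨x, hx⟩ :=
    hp.degreeEquiv.symm_apply_eq.mpr (hp.degreeEquiv_of ⟨x, hx⟩).symm
  rw [degreeMap, LinearEquiv.conj_apply, LinearMap.comp_apply, LinearMap.comp_apply,
    LinearEquiv.coe_coe, LinearEquiv.coe_coe, this, DirectSum.lmap_of, degreeEquiv_of]
  rfl

lemma degreeMap_lie (hp : IsLieGrading K 𝔪 p) (x y : 𝔪) :
    hp.degreeMap ⁅x, y⁆ = ⁅x, hp.degreeMap y⁆ - ⁅y, hp.degreeMap x⁆ := by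
  have hx : x ∈ ⨆ k, p k := hp.1.submodule_iSup_eq_top ▸ Submodule.mem_top
  have hy : y ∈ ⨆ k, p k := hp.1.submodule_iSup_eq_top ▸ Submodule.mem_top
  induction hx using Submodule.iSup_induction' with
  | mem i x hxi =>
    induction hy using Submodule.iSup_induction' with
    | mem j y hyj =>
      rw [hp.degreeMap_of_mem hxi, hp.degreeMap_of_mem hyj,
        hp.degreeMap_of_mem (hp.2 i j x hxi y hyj), lie_smul, lie_smul, ← lie_skew y x, smul_neg,
        sub_neg_eq_add, add_smul, add_comm]
    | zero => simp
    | add y z _ _ hy hz => simp only [lie_add, map_add, hy, hz, add_lie]; abel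
  | zero => simp
  | add x z _ _ hx hz => simp only [add_lie, map_add, hx, hz, lie_add]; abel

noncomputable def degreeDerivation (hp : IsLieGrading K 𝔪 p) : LieDerivation K 𝔪 𝔪 :=
  ⟨hp.degreeMap, hp.degreeMap_lie⟩

lemma mem_zero_of_degreeDerivation_eq_zero [IsAddTorsionFree 𝔪] (hp : IsLieGrading K 𝔪 p)
    {x : 𝔪} (hx : hp.degreeDerivation x = 0) : x ∈ p 0 := by
  set c := hp.degreeEquiv.symm x
  have hck : ∀ k, k ≠ 0 → c k = 0 := fun k hk => by
    have : k • c k = 0 := by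
      simpa [degreeDerivation, degreeMap, LinearEquiv.conj_apply] using
        congr_arg (fun y => hp.degreeEquiv.symm y k) hx
    exact (smul_eq_zero.mp this).resolve_left hk
  have hc : c = DirectSum.of (fun k => p k) 0 (c 0) := by
    ext k
    by_cases hk : k = 0
    · subst hk; simp
    · simp [hck k hk, DirectSum.of_eq_of_ne _ _ _ hk]
  rw [← hp.degreeEquiv.apply_symm_apply x]
  change hp.degreeEquiv c ∈ p 0
  rw [hc, degreeEquiv_of]
  exact (c 0).2

end IsLieGrading

namespace LinearMap

theorem finite_setOf_not_injective_add_smul {L U X : Type*} [Field L] [AddCommGroup U]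
    [Module L U] [FiniteDimensional L U] [AddCommGroup X] [Module L X] {P Q : U →ₗ[L] X} {z : L}
    (hz : Injective (P + z • Q)) : {s : L | ¬Injective (P + s • Q)}.Finite := by
  obtain ⟨G, hG⟩ := (P + z • Q).exists_leftInverse_of_injective (ker_eq_bot.mpr hz)
  refine (Module.End.finite_hasEigenvalue (G ∘ₗ Q)).preimage
    ((inv_injective.comp (sub_right_injective (b := z))).injOn) |>.subset fun s hs => ?_
  -- A kernel vector of `P + s • Q` is an eigenvector of `G ∘ Q` with eigenvalue `(z - s)⁻¹`.
  obtain ⟨v, hv, hv0⟩ : ∃ v, (P + s • Q) v = 0 ∧ v ≠ 0 := by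
    simpa [injective_iff_map_eq_zero, not_forall] using hs
  have hv_eq : v = (z - s) • G (Q v) := by
    have : (P + z • Q) v = (z - s) • Q v := by
      rw [← sub_eq_zero, ← hv]; simp only [add_apply, smul_apply]; module
    rw [← map_smul, ← this, ← comp_apply, hG, id_apply]
  have hzs : z - s ≠ 0 := by rintro h; simp [h, hv0] at hv_eq
  refine Module.End.hasEigenvalue_of_hasEigenvector (x := v) ⟨?_, hv0⟩
  rw [Module.End.mem_eigenspace_iff, comp_apply]
  exact (eq_inv_smul_iff₀ hzs).mpr hv_eq.symm

theorem exists_injective_add_smul_of_injective_baseChange {K L V W : Type*} [Field K] [Infinite K]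
    [Field L] [Algebra K L] [AddCommGroup V] [Module K V] [FiniteDimensional K V]
    [AddCommGroup W] [Module K W] (A B : V →ₗ[K] W) {z : L}
    (hz : Injective (A.baseChange L + z • B.baseChange L)) : ∃ t : K, Injective (A + t • B) := by
  obtain ⟨t, ht⟩ := ((finite_setOf_not_injective_add_smul hz).preimage
    (algebraMap K L).injective.injOn).infinite_compl.nonempty
  refine ⟨t, ?_⟩
  rw [← Module.FaithfullyFlat.lTensor_injective_iff_injective K L, ← baseChange_eq_ltensor,
    baseChange_add, baseChange_smul, ← algebraMap_smul L t]
  simpa using ht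

variable {R A M : Type*} [CommRing R] [CommRing A] [Algebra R A] [AddCommGroup M] [Module R M]

noncomputable def evalLeft (f : A →ₗ[R] R) : A ⊗[R] M →ₗ[R] M :=
  TensorProduct.lid R M ∘ₗ f.rTensor M

@[simp]
lemma evalLeft_tmul (f : A →ₗ[R] R) (a : A) (x : M) : f.evalLeft (a ⊗ₜ x) = f a • x := rfl

end LinearMap

section LieBaseChange

variable {R A L : Type*} [CommRing R] [CommRing A] [Algebra R A] [LieRing L] [LieAlgebra R L]

lemma LinearMap.evalLeft_lie_one_tmul (f : A →ₗ[R] R) (z : A ⊗[R] L) (y : L) :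
    f.evalLeft ⁅z, (1 : A) ⊗ₜ[R] y⁆ = ⁅f.evalLeft z, y⁆ := by
  induction z using TensorProduct.induction_on with
  | zero => simp
  | tmul a x => simp [LieAlgebra.ExtendScalars.bracket_tmul]
  | add z w hz hw => simp only [add_lie, map_add, hz, hw]

lemma LinearMap.evalLeft_one_tmul_lie (f : A →ₗ[R] R) (x : L) (z : A ⊗[R] L) :
    f.evalLeft ⁅(1 : A) ⊗ₜ[R] x, z⁆ = ⁅x, f.evalLeft z⁆ := by
  rw [← lie_skew, map_neg, f.evalLeft_lie_one_tmul, ← lie_skew, neg_neg]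

noncomputable def LieDerivation.evalLeft (f : A →ₗ[R] R)
    (D : LieDerivation A (A ⊗[R] L) (A ⊗[R] L)) : LieDerivation R L L where
  toLinearMap := f.evalLeft ∘ₗ (D : A ⊗[R] L →ₗ[A] A ⊗[R] L).restrictScalars R ∘ₗ
    TensorProduct.mk R A L 1
  leibniz' x y := by
    have h : (1 : A) ⊗ₜ[R] ⁅x, y⁆ = ⁅(1 : A) ⊗ₜ[R] x, (1 : A) ⊗ₜ[R] y⁆ := by
      rw [LieAlgebra.ExtendScalars.bracket_tmul, mul_one]
    simp only [LinearMap.comp_apply, LinearMap.restrictScalars_apply, TensorProduct.mk_apply,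
      LieDerivation.coeFn_coe, h, D.apply_lie_eq_sub, map_sub, f.evalLeft_one_tmul_lie]

lemma LieAlgebra.ExtendScalars.tmul_mem_center {x : L} (hx : x ∈ LieAlgebra.center R L) (a : A) :
    a ⊗ₜ[R] x ∈ LieAlgebra.center A (A ⊗[R] L) := by
  rw [LieModule.mem_maxTrivSubmodule]
  intro z
  induction z using TensorProduct.induction_on with
  | zero => simp
  | tmul b y =>
    rw [LieAlgebra.ExtendScalars.bracket_tmul, (LieModule.mem_maxTrivSubmodule R L L x).mp hx y,
      tmul_zero]
  | add z w hz hw => rw [add_lie, hz, hw, add_zero]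

lemma LieAlgebra.ExtendScalars.baseChange_subtype_mem_center
    (w : A ⊗[R] LieAlgebra.center R L) :
    (LieAlgebra.center R L).toSubmodule.subtype.baseChange A w ∈
      LieAlgebra.center A (A ⊗[R] L) := by
  induction w using TensorProduct.induction_on with
  | zero => simp
  | tmul a x => exact tmul_mem_center x.2 a
  | add z w hz hw => rw [map_add]; exact add_mem hz hw

end LieBaseChange

section Complex

variable {V W : Type*} [AddCommGroup V] [Module ℝ V] [AddCommGroup W] [Module ℝ W]

lemma Complex.one_tmul_evalLeft_re_add_I_tmul_evalLeft_im (z : ℂ ⊗[ℝ] V) :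
    (1 : ℂ) ⊗ₜ Complex.reLm.evalLeft z + Complex.I ⊗ₜ Complex.imLm.evalLeft z = z := by
  induction z using TensorProduct.induction_on with
  | zero => simp
  | tmul c x =>
    simp only [LinearMap.evalLeft_tmul, Complex.reLm_coe, Complex.imLm_coe, tmul_smul]
    rw [smul_tmul', smul_tmul', ← add_tmul, Complex.real_smul, Complex.real_smul, mul_one,
      Complex.re_add_im]
  | add z w hz hw => rw [map_add, map_add, tmul_add, tmul_add, add_add_add_comm, hz, hw]

lemma LinearMap.eq_baseChange_add_I_smul_baseChange (G : ℂ ⊗[ℝ] V →ₗ[ℂ] ℂ ⊗[ℝ] W) :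
    G = (Complex.reLm.evalLeft ∘ₗ G.restrictScalars ℝ ∘ₗ TensorProduct.mk ℝ ℂ V 1).baseChange ℂ +
      Complex.I • (Complex.imLm.evalLeft ∘ₗ G.restrictScalars ℝ ∘ₗ
        TensorProduct.mk ℝ ℂ V 1).baseChange ℂ := by
  ext x
  simp only [AlgebraTensorModule.curry_apply, TensorProduct.curry_apply, coe_restrictScalars,
    restrictScalars_add, restrictScalars_smul, add_apply, baseChange_tmul, coe_comp,
    Function.comp_apply, mk_apply, smul_apply]
  rw [smul_tmul', smul_eq_mul, mul_one]
  exact (Complex.one_tmul_evalLeft_re_add_I_tmul_evalLeft_im _).symm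

end Complex

open LieAlgebra in
theorem LieDerivation.exists_injOn_center_of_complexification
    {𝔫 : Type*} [LieRing 𝔫] [LieAlgebra ℝ 𝔫] [FiniteDimensional ℝ 𝔫]
    (D : LieDerivation ℂ (ℂ ⊗[ℝ] 𝔫) (ℂ ⊗[ℝ] 𝔫))
    (hD : ∀ z ∈ center ℂ (ℂ ⊗[ℝ] 𝔫), D z = 0 → z = 0) :
    ∃ δ : LieDerivation ℝ 𝔫 𝔫, ∀ x ∈ center ℝ 𝔫, δ x = 0 → x = 0 := by
  set ι := (center ℝ 𝔫).toSubmodule.subtype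
  set a := (D.evalLeft Complex.reLm : 𝔫 →ₗ[ℝ] 𝔫) ∘ₗ ι
  set b := (D.evalLeft Complex.imLm : 𝔫 →ₗ[ℝ] 𝔫) ∘ₗ ι
  have hinj : Injective (a.baseChange ℂ + Complex.I • b.baseChange ℂ) := by
    have hG : (D : ℂ ⊗[ℝ] 𝔫 →ₗ[ℂ] ℂ ⊗[ℝ] 𝔫) ∘ₗ ι.baseChange ℂ =
        a.baseChange ℂ + Complex.I • b.baseChange ℂ :=
      LinearMap.eq_baseChange_add_I_smul_baseChange _
    rw [← hG]
    have hι : Injective (ι.baseChange ℂ) := by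
      rw [LinearMap.baseChange_eq_ltensor]
      exact Module.Flat.lTensor_preserves_injective_linearMap _ Subtype.val_injective
    refine (injective_iff_map_eq_zero _).mpr fun w hw => hι ?_
    rw [map_zero]
    exact hD _ (ExtendScalars.baseChange_subtype_mem_center w) hw
  obtain ⟨t, ht⟩ := LinearMap.exists_injective_add_smul_of_injective_baseChange a b hinj
  refine ⟨D.evalLeft Complex.reLm + t • D.evalLeft Complex.imLm, fun x hx hδx => ?_⟩
  have := @ht ⟨x, hx⟩ 0 (by simpa [a, b, ι] using hδx)
  exact congr_arg Subtype.val this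

attribute [local instance] LieRing.ofAssociativeRing

namespace LieDerivation

variable {R L : Type*} [CommRing R] [LieRing L] [LieAlgebra R L]

/-- The adjoint action of `L` on the semidirect product `Rδ ⋉ L`, with `(s, y) ↔ s δ + y`. -/
def adSemidirect (δ : LieDerivation R L L) : L →ₗ⁅R⁆ Module.End R (R × L) where
  toFun x := LinearMap.inr R R L ∘ₗ
    ((LinearMap.fst R R L).smulRight (δ x) + LieAlgebra.ad R L x ∘ₗ LinearMap.snd R R L)
  map_add' x y := LinearMap.ext fun q => by
    simp only [map_add, LinearMap.coe_comp, LinearMap.coe_inr, comp_apply, LinearMap.add_apply,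
      LinearMap.coe_smulRight, LinearMap.fst_apply, smul_add, LinearMap.coe_snd,
      LieAlgebra.ad_apply, Prod.mk_add_mk, add_zero, Prod.mk.injEq, true_and]
    abel
  map_smul' r x := LinearMap.ext fun q => by simp [smul_comm r]
  map_lie' {x y} := LinearMap.ext fun q => by
    simp only [δ.apply_lie_eq_sub, LieHom.map_lie, LieRing.of_associative_ring_bracket,
      LinearMap.coe_comp, LinearMap.coe_inr, comp_apply, LinearMap.add_apply,
      LinearMap.coe_smulRight, LinearMap.fst_apply, smul_sub, LinearMap.coe_snd,
      LinearMap.sub_apply, Module.End.mul_apply, LieAlgebra.ad_apply, zero_smul, lie_add, lie_smul,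
      zero_add, Prod.mk_sub_mk, sub_self, Prod.mk.injEq, true_and]
    abel

@[simp]
lemma adSemidirect_apply (δ : LieDerivation R L L) (x : L) (q : R × L) :
    δ.adSemidirect x q = (0, q.1 • δ x + ⁅x, q.2⁆) := rfl

lemma adSemidirect_injective (δ : LieDerivation R L L)
    (hδ : ∀ x ∈ LieAlgebra.center R L, δ x = 0 → x = 0) : Injective δ.adSemidirect := by
  refine (injective_iff_map_eq_zero _).mpr fun x hx => hδ x ?_ ?_
  · rw [LieModule.mem_maxTrivSubmodule]
    intro y
    rw [← lie_skew, neg_eq_zero]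
    simpa using congr_arg (fun f => (f (0, y)).2) hx
  · simpa using congr_arg (fun f => (f (1, 0)).2) hx

end LieDerivation

/-- Let `𝔫` be a finite-dimensional real Lie algebra whose
complexification admits a special grading.  Then `𝔫` has a faithful module of dimension
`1 + dim 𝔫`: there is an injective Lie algebra homomorphism from `𝔫` into the
endomorphisms of a real vector space of dimension `1 + dim 𝔫`. -/
theorem exists_faithful_module_of_hasSpecialGrading
    {𝔫 : Type*} [LieRing 𝔫] [LieAlgebra ℝ 𝔫] [FiniteDimensional ℝ 𝔫]
    (h : HasSpecialGrading ℂ (ℂ ⊗[ℝ] 𝔫)) :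
    ∃ φ : 𝔫 →ₗ⁅ℝ⁆ Module.End ℝ (Fin (1 + Module.finrank ℝ 𝔫) → ℝ),
      Function.Injective φ := by
  obtain ⟨p, hp, hcen⟩ := h
  have := IsAddTorsionFree.of_isTorsionFree ℂ (ℂ ⊗[ℝ] 𝔫)
  have hD : ∀ z ∈ LieAlgebra.center ℂ (ℂ ⊗[ℝ] 𝔫), hp.degreeDerivation z = 0 → z = 0 :=
    fun z hz hDz => (Submodule.eq_bot_iff _).mp hcen z
      ⟨hp.mem_zero_of_degreeDerivation_eq_zero hDz, hz⟩
  obtain ⟨δ, hδ⟩ := hp.degreeDerivation.exists_injOn_center_of_complexification hD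
  let e : (ℝ × 𝔫) ≃ₗ[ℝ] (Fin (1 + Module.finrank ℝ 𝔫) → ℝ) :=
    LinearEquiv.ofFinrankEq _ _ (by simp [Module.finrank_prod])
  exact ⟨e.lieConj.toLieHom.comp δ.adSemidirect,
    e.lieConj.injective.comp (δ.adSemidirect_injective hδ)⟩
end
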